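/- arXiv:0809.4840 — 5 statements merged into one kernel-verified Lean document; each statement's English description precedes it below -/
import Mathlib

section
/- Let k ≥ 2 and σ ≥ 2, and let S be a k-noncrossing, σ-canonical structure over [n]. Define m̄(S) to be the set of S-arcs lying in a stack of S that contains a ≺-maximal arc of S. Then the sequence of arc sets (m̄₁,…,m̄_t) defined by m̄₁ = m̄(S) and inductively m̄_{s+1} = m̄(S ∖ (m̄₁ ∪ ⋯ ∪ m̄_s)) (until no arcs remain) is well defined — at every stage the remaining diagram is again k-noncrossing and σ-canonical — and partitions the arc set of S. Hence every k-noncrossing, σ-canonical RNA structure corresponds to a unique sequence of shadows. -/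
open Classical

/-- `ArcNested a b` means arc `a` is nested in arc `b`, i.e. `a ≺ b`. -/
def ArcNested (a b : ℕ × ℕ) : Prop := b.1 < a.1 ∧ a.2 < b.2

/-- Two arcs cross. -/
def ArcCross (a b : ℕ × ℕ) : Prop :=
  (a.1 < b.1 ∧ b.1 < a.2 ∧ a.2 < b.2) ∨ (b.1 < a.1 ∧ a.1 < b.2 ∧ b.2 < a.2)

/-- A diagram over `[n] = {1,…,n}`: a partial matching given by its set of arcs `(i,j)`, `i<j`. -/
def IsDiagram (n : ℕ) (D : Finset (ℕ × ℕ)) : Prop :=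
  (∀ a ∈ D, 1 ≤ a.1 ∧ a.1 < a.2 ∧ a.2 ≤ n) ∧
  (∀ a ∈ D, ∀ b ∈ D, a ≠ b → a.1 ≠ b.1 ∧ a.1 ≠ b.2 ∧ a.2 ≠ b.1 ∧ a.2 ≠ b.2)

/-- `D` contains `k` mutually crossing arcs `(i₁,j₁),…,(i_k,j_k)`
with `i₁<⋯<i_k<j₁<⋯<j_k`. -/
def HasKCrossing (k : ℕ) (D : Finset (ℕ × ℕ)) : Prop :=
  ∃ f : Fin k → ℕ × ℕ, (∀ t, f t ∈ D) ∧
    (∀ t u : Fin k, t < u → (f t).1 < (f u).1) ∧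
    (∀ t u : Fin k, t < u → (f t).2 < (f u).2) ∧
    (∀ t u : Fin k, (f t).1 < (f u).2)

/-- `D` is `k`-noncrossing: no `k` mutually crossing arcs. -/
def Noncrossing (k : ℕ) (D : Finset (ℕ × ℕ)) : Prop := ¬ HasKCrossing k D

/-- Vertex `r` is unpaired in `D`. -/
def Unpaired (D : Finset (ℕ × ℕ)) (r : ℕ) : Prop := ∀ a ∈ D, a.1 ≠ r ∧ a.2 ≠ r

/-- Vertex `r` is paired in `D`. -/
def Paired (D : Finset (ℕ × ℕ)) (r : ℕ) : Prop := ∃ a ∈ D, a.1 = r ∨ a.2 = r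

/-- `IsStack D i j l`: the parallel arcs `(i,j),(i+1,j-1),…,(i+l-1,j-l+1)` all belong to `D`
and this run is maximal (a stack of `D` of length `l`). -/
def IsStack (D : Finset (ℕ × ℕ)) (i j l : ℕ) : Prop :=
  0 < l ∧ (∀ t < l, (i + t, j - t) ∈ D) ∧ (i - 1, j + 1) ∉ D ∧ (i + l, j - l) ∉ D

/-- `D` is `σ`-canonical: every stack has length at least `σ`. -/
def Canonical (σ : ℕ) (D : Finset (ℕ × ℕ)) : Prop := ∀ i j l, IsStack D i j l → σ ≤ l

/-- All arcs of `D` have length (`j - i`) at least `4`. -/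
def MinArc4 (D : Finset (ℕ × ℕ)) : Prop := ∀ a ∈ D, a.1 + 4 ≤ a.2

/-- A `⟨k,σ⟩`-structure over `[n]`: a `k`-noncrossing, `σ`-canonical diagram over `[n]`
all of whose arcs have length at least `4`. -/
def IsRNAStructure (n k σ : ℕ) (D : Finset (ℕ × ℕ)) : Prop :=
  IsDiagram n D ∧ Noncrossing k D ∧ Canonical σ D ∧ MinArc4 D

/-- Arc `a` is `≺`-maximal in `D`: it is nested in no other `D`-arc. -/
def PrecMaximal (D : Finset (ℕ × ℕ)) (a : ℕ × ℕ) : Prop :=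
  a ∈ D ∧ ∀ b ∈ D, ¬ ArcNested a b

/-- Arcs `a` and `b` lie in a common stack of `D`. -/
def InCommonStack (D : Finset (ℕ × ℕ)) (a b : ℕ × ℕ) : Prop :=
  ∃ i j l, IsStack D i j l ∧ (∃ t < l, a = (i + t, j - t)) ∧ (∃ t < l, b = (i + t, j - t))

/-- `m̄(D)`: the set of `D`-arcs lying in a stack of `D` containing a `≺`-maximal arc of `D`
(the shadow of the motif induced by the `≺`-maximal arcs). -/
noncomputable def shadowArcs (D : Finset (ℕ × ℕ)) : Finset (ℕ × ℕ) :=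
  D.filter fun a => ∃ b, PrecMaximal D b ∧ InCommonStack D a b

/-- The residualDiagram diagrams: `residualDiagram D 0 = D` and
`residualDiagram D (s+1) = residualDiagram D s ∖ m̄(residualDiagram D s)`. -/
noncomputable def residualDiagram (D : Finset (ℕ × ℕ)) : ℕ → Finset (ℕ × ℕ)
  | 0 => D
  | s + 1 => residualDiagram D s \ shadowArcs (residualDiagram D s)

-- basic fact: a run arc satisfies fst < snd
lemma stack_lt {n : ℕ} {E : Finset (ℕ × ℕ)} (hE : IsDiagram n E)
    {i j l t : ℕ} (h : IsStack E i j l) (ht : t < l) :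
    i + t < j - t ∧ 1 ≤ i + t ∧ j - t ≤ n := by
  have := hE.1 _ (h.2.1 t ht)
  exact ⟨this.2.1, this.1, this.2.2⟩

lemma stack_i_le {n : ℕ} {E : Finset (ℕ × ℕ)} (hE : IsDiagram n E)
    {i j l i' j' l' t t' : ℕ} (h : IsStack E i j l) (h' : IsStack E i' j' l')
    (ht : t < l) (ht' : t' < l') (heq : (i + t, j - t) = (i' + t', j' - t')) :
    i' ≤ i := by
  by_contra hlt
  push_neg at hlt
  have h1 := stack_lt hE h ht
  have h2 := stack_lt hE h' ht'
  have e1 : i + t = i' + t' := congrArg Prod.fst heq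
  have e2 : j - t = j' - t' := congrArg Prod.snd heq
  -- consider s = i' - 1 - i in the first run
  set s := i' - 1 - i with hs
  have hsl : s < l := by omega
  have harc := h.2.1 s hsl
  have h3 := stack_lt hE h hsl
  have : (i + s, j - s) = (i' - 1, j' + 1) := by
    have : i + s = i' - 1 := by omega
    have : j - s = j' + 1 := by omega
    simp_all
  rw [this] at harc
  exact h'.2.2.1 harc

lemma stack_unique {n : ℕ} {E : Finset (ℕ × ℕ)} (hE : IsDiagram n E)
    {i j l i' j' l' t t' : ℕ} (h : IsStack E i j l) (h' : IsStack E i' j' l')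
    (ht : t < l) (ht' : t' < l') (heq : (i + t, j - t) = (i' + t', j' - t')) :
    i = i' ∧ j = j' ∧ l = l' := by
  have hii : i = i' :=
    le_antisymm (stack_i_le hE h' h ht' ht heq.symm) (stack_i_le hE h h' ht ht' heq)
  have e1 : i + t = i' + t' := congrArg Prod.fst heq
  have e2 : j - t = j' - t' := congrArg Prod.snd heq
  have h1 := stack_lt hE h ht
  have h2 := stack_lt hE h' ht'
  have htt : t = t' := by omega
  have hjj : j = j' := by omega
  subst hii hjj htt
  have hll : ¬ l < l' := fun hc => h.2.2.2 (h'.2.1 l hc)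
  have hll' : ¬ l' < l := fun hc => h'.2.2.2 (h.2.1 l' hc)
  omega

lemma exists_stack {n : ℕ} {E : Finset (ℕ × ℕ)} (hE : IsDiagram n E) {a : ℕ × ℕ}
    (ha : a ∈ E) : ∃ i j l, IsStack E i j l ∧ ∃ t < l, a = (i + t, j - t) := by
  classical
  set P : ℕ → Prop := fun m => ∀ u ≤ m, (a.1 - u, a.2 + u) ∈ E with hP
  have hP0 : P 0 := by
    intro u hu
    simp only [Nat.le_zero] at hu
    subst hu
    simpa using ha
  set d := Nat.findGreatest P n with hd
  have hPd : P d := Nat.findGreatest_spec (Nat.zero_le n) hP0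
  have hPd1 : ¬ P (d + 1) := by
    intro hc
    have hmem := hc (d + 1) le_rfl
    have hb := hE.1 _ hmem
    have : d + 1 ≤ n := by omega
    have := Nat.le_findGreatest this hc
    omega
  have hout : (a.1 - (d + 1), a.2 + (d + 1)) ∉ E := by
    intro hc
    apply hPd1
    intro u hu
    rcases Nat.lt_or_ge u (d + 1) with h | h
    · exact hPd u (by omega)
    · have : u = d + 1 := by omega
      subst this; exact hc
  have hda : d < a.1 := by
    have := hE.1 _ (hPd d le_rfl)
    simp only at this
    omega
  set i := a.1 - d with hi
  set j := a.2 + d with hj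
  set Q : ℕ → Prop := fun m => ∀ u ≤ m, (i + u, j - u) ∈ E with hQ
  have hQd : Q d := by
    intro u hu
    have : (i + u, j - u) = (a.1 - (d - u), a.2 + (d - u)) := by
      have : i + u = a.1 - (d - u) := by omega
      have : j - u = a.2 + (d - u) := by
        have h1 := hE.1 _ ha
        omega
      simp_all
    rw [this]
    exact hPd (d - u) (by omega)
  have hdn : d ≤ n := by
    have := hE.1 _ (hPd d le_rfl)
    simp only at this
    omega
  set e := Nat.findGreatest Q n with he
  have hQe : Q e := Nat.findGreatest_spec hdn hQd
  have hde : d ≤ e := Nat.le_findGreatest hdn hQd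
  have hout2 : (i + (e + 1), j - (e + 1)) ∉ E := by
    intro hc
    have hQe1 : Q (e + 1) := by
      intro u hu
      rcases Nat.lt_or_ge u (e + 1) with h | h
      · exact hQe u (by omega)
      · have : u = e + 1 := by omega
        subst this; exact hc
    have hb := hE.1 _ hc
    simp only at hb
    have : e + 1 ≤ n := by omega
    have := Nat.le_findGreatest this hQe1
    omega
  refine ⟨i, j, e + 1, ⟨Nat.succ_pos e, fun t htl => hQe t (by omega), ?_, hout2⟩,
    d, by omega, ?_⟩
  · have : (i - 1, j + 1) = (a.1 - (d + 1), a.2 + (d + 1)) := by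
      have h1 : i - 1 = a.1 - (d + 1) := by omega
      have h2 : j + 1 = a.2 + (d + 1) := by omega
      simp_all
    rw [this]; exact hout
  · have h1 : i + d = a.1 := by omega
    have h2 : j - d = a.2 := by omega
    rw [h1, h2]

lemma mem_shadowArcs {E : Finset (ℕ × ℕ)} {a : ℕ × ℕ} :
    a ∈ shadowArcs E ↔ a ∈ E ∧ ∃ b, PrecMaximal E b ∧ InCommonStack E a b := by
  simp [shadowArcs]

lemma shadow_stack_closed {n : ℕ} {E : Finset (ℕ × ℕ)} (hE : IsDiagram n E)
    {i j l t t' : ℕ} (h : IsStack E i j l) (ht : t < l) (ht' : t' < l)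
    (hmem : (i + t, j - t) ∈ shadowArcs E) : (i + t', j - t') ∈ shadowArcs E := by
  rcases mem_shadowArcs.mp hmem with ⟨-, b, hb, i₀, j₀, l₀, hst, ⟨s, hs, has⟩, ⟨s', hs', hbs⟩⟩
  obtain ⟨rfl, rfl, rfl⟩ := stack_unique hE hst h hs ht has.symm
  exact mem_shadowArcs.mpr ⟨h.2.1 t' ht', b, hb,
    _, _, _, h, ⟨t', ht', rfl⟩, ⟨s', hs', hbs⟩⟩

lemma diagram_subset {n : ℕ} {D E : Finset (ℕ × ℕ)} (h : E ⊆ D) (hD : IsDiagram n D) :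
    IsDiagram n E :=
  ⟨fun a ha => hD.1 a (h ha), fun a ha b hb => hD.2 a (h ha) b (h hb)⟩

lemma canonical_sdiff {n σ : ℕ} {E : Finset (ℕ × ℕ)} (hE : IsDiagram n E)
    (hc : Canonical σ E) : Canonical σ (E \ shadowArcs E) := by
  intro i j l hst
  have hE' : IsDiagram n (E \ shadowArcs E) := diagram_subset (Finset.sdiff_subset) hE
  have h0 : (i + 0, j - 0) ∈ E \ shadowArcs E := hst.2.1 0 hst.1
  rw [Finset.mem_sdiff] at h0
  obtain ⟨i₀, j₀, l₀, hst₀, t₀, ht₀, heq₀⟩ := exists_stack hE h0.1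
  -- all arcs of the E-stack avoid the shadow
  have hkeep : ∀ u < l₀, (i₀ + u, j₀ - u) ∈ E \ shadowArcs E := by
    intro u hu
    rw [Finset.mem_sdiff]
    refine ⟨hst₀.2.1 u hu, fun hc2 => ?_⟩
    have := shadow_stack_closed hE hst₀ hu ht₀ hc2
    rw [← heq₀] at this
    simp only [Nat.add_zero, Nat.sub_zero] at h0 ⊢
    exact h0.2 this
  have hst₀' : IsStack (E \ shadowArcs E) i₀ j₀ l₀ :=
    ⟨hst₀.1, hkeep, fun hc2 => hst₀.2.2.1 (Finset.mem_sdiff.mp hc2).1,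
      fun hc2 => hst₀.2.2.2 (Finset.mem_sdiff.mp hc2).1⟩
  have heq : (i + 0, j - 0) = (i₀ + t₀, j₀ - t₀) := by
    simpa using heq₀
  obtain ⟨-, -, rfl⟩ := stack_unique hE' hst hst₀' hst.1 ht₀ heq
  exact hc _ _ _ hst₀

lemma shadow_nonempty {n : ℕ} {E : Finset (ℕ × ℕ)} (hE : IsDiagram n E)
    (hne : E.Nonempty) : (shadowArcs E).Nonempty := by
  obtain ⟨b, hb, hmax⟩ := Finset.exists_max_image E (fun a => a.2 - a.1) hne
  have hprec : PrecMaximal E b := by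
    refine ⟨hb, fun c hc hn => ?_⟩
    have h1 := hE.1 _ hb
    have h2 := hE.1 _ hc
    have h3 := hmax c hc
    rcases hn with ⟨hn1, hn2⟩
    omega
  obtain ⟨i, j, l, hst, t, ht, heq⟩ := exists_stack hE hb
  refine ⟨b, mem_shadowArcs.mpr ⟨hb, b, hprec, i, j, l, hst, ⟨t, ht, heq⟩, ⟨t, ht, heq⟩⟩⟩

lemma noncrossing_subset {k : ℕ} {D E : Finset (ℕ × ℕ)} (h : E ⊆ D)
    (hD : Noncrossing k D) : Noncrossing k E := by
  intro ⟨f, hf, h1, h2, h3⟩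
  exact hD ⟨f, fun t => h (hf t), h1, h2, h3⟩

lemma residual_succ_subset (D : Finset (ℕ × ℕ)) (s : ℕ) :
    residualDiagram D (s + 1) ⊆ residualDiagram D s := Finset.sdiff_subset

lemma residual_antitone (D : Finset (ℕ × ℕ)) {s t : ℕ} (h : s ≤ t) :
    residualDiagram D t ⊆ residualDiagram D s := by
  induction t with
  | zero => simp_all
  | succ t ih =>
    rcases Nat.lt_or_ge s (t + 1) with h' | h'
    · exact (residual_succ_subset D t).trans (ih (by omega))
    · have : s = t + 1 := by omega
      subst this; exact subset_rfl


/-- Let `k,σ ≥ 2` and let `S` be a `k`-noncrossing, `σ`-canonical structure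
over `[n]`.  The sequence `m̄₁ = m̄(S)`, `m̄_{s+1} = m̄(S ∖ (m̄₁ ∪ ⋯ ∪ m̄_s))` is well defined:
at every stage the remaining diagram is again a `k`-noncrossing, `σ`-canonical diagram;
eventually no arcs remain; and the sets `m̄ₛ` partition the arc set of `S`.  Hence every
`k`-noncrossing, `σ`-canonical RNA structure corresponds to a unique sequence of shadows. -/
theorem statement2 (n k σ : ℕ) (hk : 2 ≤ k) (hσ : 2 ≤ σ) (D : Finset (ℕ × ℕ))
    (hD : IsRNAStructure n k σ D) :
    (∀ s, IsDiagram n (residualDiagram D s) ∧ Noncrossing k (residualDiagram D s) ∧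
      Canonical σ (residualDiagram D s)) ∧
    (∃ t, residualDiagram D t = ∅) ∧
    (∀ a ∈ D, ∃! s : ℕ, a ∈ shadowArcs (residualDiagram D s)) := by
  have hA : ∀ s, IsDiagram n (residualDiagram D s) ∧ Noncrossing k (residualDiagram D s) ∧
      Canonical σ (residualDiagram D s) := by
    intro s
    induction s with
    | zero => exact ⟨hD.1, hD.2.1, hD.2.2.1⟩
    | succ s ih =>
      exact ⟨diagram_subset (residual_succ_subset D s) ih.1,
        noncrossing_subset (residual_succ_subset D s) ih.2.1,
        canonical_sdiff ih.1 ih.2.2⟩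
  -- termination
  have hcard : ∀ s, residualDiagram D s = ∅ ∨ (residualDiagram D s).card + s ≤ D.card := by
    intro s
    induction s with
    | zero => right; simp [residualDiagram]
    | succ s ih =>
      rcases ih with h | h
      · left; show residualDiagram D s \ _ = ∅; simp [h]
      · rcases Finset.eq_empty_or_nonempty (residualDiagram D s) with he | hne
        · left; show residualDiagram D s \ _ = ∅; simp [he]
        · right
          obtain ⟨b, hb⟩ := shadow_nonempty (hA s).1 hne
          have hb' : b ∈ residualDiagram D s := (mem_shadowArcs.mp hb).1
          have hss : residualDiagram D (s + 1) ⊂ residualDiagram D s := by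
            refine ⟨residual_succ_subset D s, fun hc => ?_⟩
            have := hc hb'
            rw [show residualDiagram D (s+1) = residualDiagram D s \ shadowArcs (residualDiagram D s) from rfl, Finset.mem_sdiff] at this
            exact this.2 hb
          have := Finset.card_lt_card hss
          omega
  have hempty : ∃ t, residualDiagram D t = ∅ := by
    refine ⟨D.card, ?_⟩
    rcases hcard D.card with h | h
    · exact h
    · exact Finset.card_eq_zero.mp (by omega)
  refine ⟨hA, hempty, fun a ha => ?_⟩
  obtain ⟨t, ht⟩ := hempty
  have hex : ∃ s, a ∉ residualDiagram D s := ⟨t, by simp [ht]⟩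
  set s₀ := Nat.find hex with hs₀
  have hs₀pos : 0 < s₀ := by
    rcases Nat.eq_zero_or_pos s₀ with h | h
    · exfalso; have := Nat.find_spec hex; rw [← hs₀, h] at this; exact this ha
    · exact h
  have hin : a ∈ residualDiagram D (s₀ - 1) := by
    by_contra hc
    have := Nat.find_min hex (m := s₀ - 1) (by omega)
    exact this hc
  have hout : a ∉ residualDiagram D (s₀ - 1 + 1) := by
    have : s₀ - 1 + 1 = s₀ := by omega
    rw [this]; exact Nat.find_spec hex
  have hsh : a ∈ shadowArcs (residualDiagram D (s₀ - 1)) := by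
    by_contra hc
    exact hout (Finset.mem_sdiff.mpr ⟨hin, hc⟩)
  refine ⟨s₀ - 1, hsh, fun s' hs' => ?_⟩
  by_contra hne
  rcases Nat.lt_or_ge s' (s₀ - 1) with h | h
  · -- a ∈ shadow (residual s') ⇒ a ∉ residual (s'+1) ⊇ residual (s₀-1)
    have : a ∉ residualDiagram D (s' + 1) :=
      fun hc => (Finset.mem_sdiff.mp hc).2 hs'
    exact this (residual_antitone D (by omega) hin)
  · have hlt : s₀ - 1 < s' := by omega
    have : a ∉ residualDiagram D (s₀ - 1 + 1) := hout
    have hsub := residual_antitone D (show s₀ - 1 + 1 ≤ s' by omega)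
    have : a ∉ residualDiagram D s' := fun hc => this (hsub hc)
    exact this (mem_shadowArcs.mp hs').1
end

section
/- For all integers j ≥ 2 and σ ≥ 2, the generating function of restricted Motzkin paths satisfies, as formal power series over ℚ: G_{j,σ}(z) · ( 1 − z − z^{2σ}·G_{j−1,σ}(z) ) = 1, i.e., G_{j,σ}(z) = 1 / ( 1 − z − z^{2σ} G_{j−1,σ}(z) ), with G_{1,σ}(z) = 1/(1−z). -/
open Classical

/-- The height of a path after `m` steps: the sum of the first `m` step values. -/
def PathSum (s : ℕ → ℤ) (m : ℕ) : ℤ := ∑ t ∈ Finset.range m, s t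

/-- A Motzkin path of length `n`, encoded by its steps `s t ∈ {1, 0, -1}`
(up, horizontal, down) for `t < n` (and `s t = 0` for `t ≥ n`): it never goes below the
`x`-axis and ends at height `0`. -/
def IsMotzkin (n : ℕ) (s : ℕ → ℤ) : Prop :=
  (∀ t, s t = 1 ∨ s t = 0 ∨ s t = -1) ∧ (∀ t, n ≤ t → s t = 0) ∧
  (∀ m, 0 ≤ PathSum s m) ∧ PathSum s n = 0

/-- `IsMaxRun s v i l`: positions `i,…,i+l-1` form a maximal run of steps with value `v`. -/
def IsMaxRun (s : ℕ → ℤ) (v : ℤ) (i l : ℕ) : Prop :=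
  0 < l ∧ (∀ t < l, s (i + t) = v) ∧ (i = 0 ∨ s (i - 1) ≠ v) ∧ s (i + l) ≠ v

/-- Every maximal run of up-steps and every maximal run of down-steps has length a
positive multiple of `σ`. -/
def RunsMultiple (σ : ℕ) (s : ℕ → ℤ) : Prop :=
  (∀ i l, IsMaxRun s 1 i l → σ ∣ l) ∧ (∀ i l, IsMaxRun s (-1) i l → σ ∣ l)

/-- `Mo_k^σ(n)`: Motzkin paths of length `n` of height `≤ σ(k-1)`, whose maximal up- and
down-runs have length a positive multiple of `σ`, and whose plateaux at height `σ` have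
length `≥ 3`. -/
def MoSet (k σ n : ℕ) : Set (ℕ → ℤ) :=
  {s | IsMotzkin n s ∧ (∀ m, PathSum s m ≤ (σ * (k - 1) : ℕ)) ∧ RunsMultiple σ s ∧
    ∀ i l, IsMaxRun s 0 i l → PathSum s i = (σ : ℤ) → 3 ≤ l}

/-- A `⟨k,σ⟩`-motif over `[n]`: a `⟨k,σ⟩`-structure such that (M1) any two nested arcs lie
in a common stack (equivalently, its core is nonnesting) and (M2) every stack has length
exactly `σ`. -/
def IsMotif (k σ n : ℕ) (D : Finset (ℕ × ℕ)) : Prop :=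
  IsRNAStructure n k σ D ∧
  (∀ a ∈ D, ∀ b ∈ D, ArcNested a b → InCommonStack D a b) ∧
  (∀ i j l, IsStack D i j l → l = σ)

/-- `μ*_{k,σ}(n)`: the number of `⟨k,σ⟩`-motifs over `[n]`. -/
noncomputable def muStar (k σ n : ℕ) : ℕ := Set.ncard {D : Finset (ℕ × ℕ) | IsMotif k σ n D}

/-- `μ_{j,σ}(n)`: the number of Motzkin paths of length `n` of height `≤ σ(j-1)` whose
maximal up- and down-runs have length a positive multiple of `σ`. -/
noncomputable def muPath (j σ n : ℕ) : ℕ :=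
  Set.ncard {s : ℕ → ℤ |
    IsMotzkin n s ∧ (∀ m, PathSum s m ≤ (σ * (j - 1) : ℕ)) ∧ RunsMultiple σ s}

/-- The reading map `β`: vertex `t+1` of the diagram `D` is sent to an up-step if it is an
arc-origin, to a down-step if it is an arc-terminus, and to a horizontal step otherwise. -/
noncomputable def diagramPath (D : Finset (ℕ × ℕ)) : ℕ → ℤ := fun t =>
  if ∃ a ∈ D, a.1 = t + 1 then 1 else if ∃ a ∈ D, a.2 = t + 1 then -1 else 0

/-- `G*_{k,σ}(z) = Σ_{n≥0} μ*_{k,σ}(n) zⁿ`, the generating function of `⟨k,σ⟩`-motifs. -/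
noncomputable def Gstar (k σ : ℕ) : PowerSeries ℚ :=
  PowerSeries.mk fun n => (muStar k σ n : ℚ)

/-- `G_{j,σ}(z) = Σ_{n≥0} μ_{j,σ}(n) zⁿ`, the generating function of restricted
Motzkin paths. -/
noncomputable def Gpath (j σ : ℕ) : PowerSeries ℚ :=
  PowerSeries.mk fun n => (muPath j σ n : ℚ)

namespace St9

def S (j σ n : ℕ) : Set (ℕ → ℤ) :=
  {s | IsMotzkin n s ∧ (∀ m, PathSum s m ≤ (σ * (j - 1) : ℕ)) ∧ RunsMultiple σ s}

lemma pathSum_succ (s : ℕ → ℤ) (m : ℕ) : PathSum s (m + 1) = PathSum s m + s m :=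
  Finset.sum_range_succ s m

lemma pathSum_seg (s : ℕ → ℤ) (c : ℤ) (a k : ℕ)
    (h : ∀ u, a ≤ u → u < a + k → s u = c) :
    PathSum s (a + k) = PathSum s a + k * c := by
  induction k with
  | zero => simp
  | succ k ih =>
    rw [show a + (k+1) = (a+k) + 1 from rfl, pathSum_succ,
      ih (fun u hu hu' => h u hu (by omega)), h (a+k) (by omega) (by omega)]
    push_cast; ring

/-- paths are eventually-zero ±1/0 sequences; the set of those is finite -/
lemma S_finite (j σ n : ℕ) : (S j σ n).Finite := by
  have h1 : S j σ n ⊆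
      (fun f : Fin n → ℤ => fun t => if h : t < n then f ⟨t, h⟩ else 0) ''
        {f | ∀ i, f i = 1 ∨ f i = 0 ∨ f i = -1} := by
    rintro s ⟨⟨hv, hz, -, -⟩, -, -⟩
    refine ⟨fun i => s i, fun i => hv i, funext fun t => ?_⟩
    by_cases h : t < n <;> simp [h]
    exact (hz t (le_of_not_gt h)).symm
  refine Set.Finite.subset (Set.Finite.image _ ?_) h1
  have : {f : Fin n → ℤ | ∀ i, f i = 1 ∨ f i = 0 ∨ f i = -1} ⊆
      Set.pi Set.univ (fun _ : Fin n => ({1, 0, -1} : Set ℤ)) := by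
    intro f hf i _
    rcases hf i with h | h | h <;> simp [h]
  exact Set.Finite.subset (Set.Finite.pi (fun i => Set.toFinite _)) this

lemma run_start (s : ℕ → ℤ) (v : ℤ) (p : ℕ) (h : s p = v) :
    ∃ i, i ≤ p ∧ (∀ u, i ≤ u → u ≤ p → s u = v) ∧ (i = 0 ∨ s (i - 1) ≠ v) := by
  induction p with
  | zero =>
    refine ⟨0, le_refl _, fun u hu hu' => ?_, Or.inl rfl⟩
    have : u = 0 := by omega
    rwa [this]
  | succ p ih =>
    by_cases hp : s p = v
    · obtain ⟨i, hi, hall, hleft⟩ := ih hp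
      refine ⟨i, by omega, fun u hu hu' => ?_, hleft⟩
      rcases Nat.lt_or_ge u (p+1) with h' | h'
      · exact hall u hu (by omega)
      · have : u = p + 1 := by omega
        rwa [this]
    · refine ⟨p + 1, le_refl _, fun u hu hu' => ?_, Or.inr (by simpa using hp)⟩
      have : u = p + 1 := by omega
      rwa [this]

lemma run_end (s : ℕ → ℤ) (v : ℤ) (p q : ℕ) (h : s p = v) (hq : p < q) (hqv : s q ≠ v) :
    ∃ e, p < e ∧ e ≤ q ∧ (∀ u, p ≤ u → u < e → s u = v) ∧ s e ≠ v := by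
  classical
  have hex : ∃ d : ℕ, s (p + 1 + d) ≠ v := ⟨q - p - 1, by rwa [show p + 1 + (q-p-1) = q by omega]⟩
  set d := Nat.find hex with hd
  refine ⟨p + 1 + d, by omega, ?_, fun u hu hu' => ?_, Nat.find_spec hex⟩
  · by_contra hc
    have : q < p + 1 + d := by omega
    have := Nat.find_min hex (m := q - p - 1) (by omega)
    rw [show p + 1 + (q-p-1) = q by omega] at this
    exact this hqv
  · rcases Nat.lt_or_ge u (p+1) with h' | h'
    · have : u = p := by omega
      rwa [this]
    · have := Nat.find_min hex (m := u - p - 1) (by omega)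
      rw [show p + 1 + (u-p-1) = u by omega] at this
      simpa using this

/-- build the maximal run through a given position -/
lemma exists_maxRun (s : ℕ → ℤ) (v : ℤ) (p q : ℕ) (h : s p = v) (hq : p < q) (hqv : s q ≠ v) :
    ∃ i l, IsMaxRun s v i l ∧ i ≤ p ∧ p < i + l ∧ i + l ≤ q := by
  obtain ⟨i, hip, hall, hleft⟩ := run_start s v p h
  obtain ⟨e, hpe, heq, hall2, hev⟩ := run_end s v p q h hq hqv
  refine ⟨i, e - i, ⟨by omega, fun t ht => ?_, hleft, ?_⟩, hip, by omega, by omega⟩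
  · rcases Nat.lt_or_ge (i + t) (p+1) with h' | h'
    · exact hall _ (by omega) (by omega)
    · exact hall2 _ (by omega) (by omega)
  · rwa [show i + (e - i) = e by omega]

/-- At every "run boundary" the height is a multiple of σ. -/
lemma dvd_pathSum {σ : ℕ} {s : ℕ → ℤ} (hvals : ∀ t, s t = 1 ∨ s t = 0 ∨ s t = -1)
    (hr : RunsMultiple σ s) :
    ∀ t, (t = 0 ∨ s (t - 1) = 0 ∨ s (t - 1) ≠ s t) → (σ : ℤ) ∣ PathSum s t := by
  intro t
  induction t using Nat.strong_induction_on with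
  | _ t ih =>
    intro hcond
    rcases t with _ | t'
    · simp [PathSum]
    · rcases hcond with h | h0 | hne
      · omega
      · -- previous step horizontal
        simp only [Nat.add_sub_cancel] at h0
        have hprev : (σ : ℤ) ∣ PathSum s t' := by
          apply ih t' (by omega)
          rcases t' with _ | t''
          · exact Or.inl rfl
          · by_cases h2 : s t'' = 0
            · exact Or.inr (Or.inl (by simpa using h2))
            · refine Or.inr (Or.inr ?_)
              simpa [h0] using h2
        rwa [pathSum_succ, h0, add_zero]
      · -- previous step is value v ≠ s (t'+1); a maximal run ends at t'+1
        simp only [Nat.add_sub_cancel] at hne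
        set v := s t' with hv
        obtain ⟨i, l, hrun, hip, hpl, hle⟩ :=
          exists_maxRun s v t' (t' + 1) rfl (by omega) (Ne.symm hne)
        have hil : i + l = t' + 1 := by omega
        by_cases hv0 : v = 0
        · have hprev : (σ : ℤ) ∣ PathSum s t' := by
            apply ih t' (by omega)
            rcases t' with _ | t''
            · exact Or.inl rfl
            · by_cases h2 : s t'' = 0
              · exact Or.inr (Or.inl (by simpa using h2))
              · exact Or.inr (Or.inr (by
                  simp only [Nat.add_sub_cancel]
                  rw [← hv, hv0]; exact h2))
          rw [pathSum_succ, ← hv, hv0, add_zero]; exact hprev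
        · have hl : σ ∣ l := by
            have hv1 : v = 1 ∨ v = -1 := by
              rcases hvals t' with h | h | h <;> simp [hv, h] at hv0 ⊢ <;> rw [← hv] at h <;> tauto
            rcases hv1 with hv1 | hv1 <;> rw [hv1] at hrun
            · exact hr.1 i l hrun
            · exact hr.2 i l hrun
          have hi : (σ : ℤ) ∣ PathSum s i := by
            apply ih i (by omega)
            rcases hrun.2.2.1 with h | h
            · exact Or.inl h
            · refine Or.inr (Or.inr ?_)
              have := hrun.2.1 0 hrun.1
              rw [Nat.add_zero] at this
              rw [this]; exact h
          have hsum : PathSum s (t' + 1) = PathSum s i + l * v := by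
            rw [← hil]
            exact pathSum_seg s v i l (fun u hu hu' => by
              have := hrun.2.1 (u - i) (by omega)
              rwa [show i + (u - i) = u by omega] at this)
          rw [hsum]
          exact dvd_add hi (Dvd.dvd.mul_right (Int.natCast_dvd_natCast.mpr hl) v)

def Phi (σ b m : ℕ) (Q P : ℕ → ℤ) : ℕ → ℤ := fun t =>
  if t < b then Q t else if t < b + σ then 1
  else if t < b + σ + m then P (t - (b + σ))
  else if t < b + 2*σ + m then -1 else 0

lemma decomp {j σ n : ℕ} (hσ : 2 ≤ σ) (hj : 2 ≤ j) {s : ℕ → ℤ}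
    (hs : s ∈ S j σ n) (hn : 1 ≤ n) (hlast : s (n-1) = -1) :
    ∃ b m, b + 2*σ + m = n ∧ ((fun t => if t < b then s t else 0) ∈ S j σ b) ∧
      ((fun t => if t < m then s (b+σ+t) else 0) ∈ S (j-1) σ m) ∧
      s = Phi σ b m (fun t => if t < b then s t else 0)
        (fun t => if t < m then s (b+σ+t) else 0) := by
  obtain ⟨⟨hv, hz, hnn, hend⟩, hht, hrm⟩ := hs
  have hzn : s n = 0 := hz n le_rfl
  -- b := largest m < n with PathSum s m = 0
  set b := Nat.findGreatest (fun m => PathSum s m = 0) (n-1) with hbdef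
  have hb0 : PathSum s b = 0 :=
    Nat.findGreatest_spec (P := fun m => PathSum s m = 0) (Nat.zero_le _) (by simp [PathSum])
  have hbn : b ≤ n - 1 := Nat.findGreatest_le _
  have hbmax : ∀ t, b < t → t < n → 1 ≤ PathSum s t := by
    intro t ht htn
    have h1 : ¬ (PathSum s t = 0) :=
      Nat.findGreatest_is_greatest (P := fun m => PathSum s m = 0) ht (by omega)
    have h2 := hnn t
    omega
  have hbn' : b + 1 < n := by
    by_contra hc
    have hb : b = n - 1 := by omega
    have h1 : PathSum s ((n-1) + 1) = PathSum s (n-1) + s (n-1) := pathSum_succ s (n-1)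
    rw [show n - 1 + 1 = n by omega, hlast] at h1
    rw [hb] at hb0
    omega
  have hsb : s b = 1 := by
    have h1 : PathSum s (b + 1) = PathSum s b + s b := pathSum_succ s b
    have h2 := hbmax (b+1) (by omega) (by omega)
    rcases hv b with h | h | h
    · exact h
    all_goals omega
  have hb1 : 1 ≤ b → s (b-1) ≠ 1 := by
    intro h hc
    have h1 : PathSum s ((b-1)+1) = PathSum s (b-1) + s (b-1) := pathSum_succ s (b-1)
    rw [show b - 1 + 1 = b by omega, hc] at h1
    have := hnn (b-1)
    omega
  -- maximal up-run starting exactly at b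
  obtain ⟨i, l, hrun, hib, hbl, hln⟩ :=
    exists_maxRun s 1 b n hsb (by omega) (by rw [hzn]; norm_num)
  have hib' : i = b := by
    by_contra hc
    have hblt : 1 ≤ b := by omega
    have : s (b-1) = 1 := by
      have := hrun.2.1 (b - 1 - i) (by omega)
      rwa [show i + (b - 1 - i) = b - 1 by omega] at this
    exact hb1 hblt this
  have hσl : σ ≤ l := Nat.le_of_dvd hrun.1 (hrm.1 i l hrun)
  have hB : ∀ u, u < σ → s (b + u) = 1 := by
    intro u hu
    have := hrun.2.1 u (by omega)
    rwa [hib'] at this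
  -- maximal down-run ending exactly at n
  obtain ⟨i', l', hrun', hi'n, hnl', hl'n⟩ :=
    exists_maxRun s (-1) (n-1) n hlast (by omega) (by rw [hzn]; norm_num)
  have hil' : i' + l' = n := by omega
  have hσl' : σ ≤ l' := Nat.le_of_dvd hrun'.1 (hrm.2 i' l' hrun')
  have hbi' : b + σ ≤ i' := by
    have key : ∀ u, u < σ → b + u < i' := by
      intro u hu
      by_contra hc
      have hun : b + u < n := by omega
      have : s (b + u) = -1 := by
        have := hrun'.2.1 (b + u - i') (by omega)
        rwa [show i' + (b + u - i') = b + u by omega] at this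
      have := hB u hu
      omega
    have := key (σ - 1) (by omega)
    omega
  have hn2 : b + 2*σ ≤ n := by omega
  set m := n - 2*σ - b with hmdef
  have hbm : b + 2*σ + m = n := by omega
  have hD : ∀ u, n - σ ≤ u → u < n → s u = -1 := by
    intro u h1 h2
    have := hrun'.2.1 (u - i') (by omega)
    rwa [show i' + (u - i') = u by omega] at this
  -- heights of key points
  have hσpt : PathSum s (b + σ) = σ := by
    have := pathSum_seg s 1 b σ (fun u hu hu' => by
      have := hB (u - b) (by omega); rwa [show b + (u - b) = u by omega] at this)
    rw [hb0] at this; omega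
  have hnσ : PathSum s (n - σ) = σ := by
    have := pathSum_seg s (-1) (n - σ) σ (fun u hu hu' => hD u hu (by omega))
    rw [show n - σ + σ = n by omega, hend] at this
    omega
  -- heights in the middle are at least σ
  have hC : ∀ t, b + σ ≤ t → t ≤ n - σ → (σ : ℤ) ≤ PathSum s t := by
    intro t h1 h2
    by_cases hcond : t = 0 ∨ s (t-1) = 0 ∨ s (t-1) ≠ s t
    · have hd := dvd_pathSum hv hrm t hcond
      have := hbmax t (by omega) (by omega)
      exact Int.le_of_dvd (by omega) hd
    · push_neg at hcond
      obtain ⟨ht0, hst1, heq⟩ := hcond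
      rcases hv t with hval | hval | hval
      · -- inside an up-run: walk left to its start
        obtain ⟨i0, hi0, hall0, hleft0⟩ := run_start s 1 t hval
        have hps : PathSum s t = PathSum s i0 + (t - i0 : ℕ) * 1 := by
          have := pathSum_seg s 1 i0 (t - i0) (fun u hu hu' => hall0 u hu (by omega))
          rwa [show i0 + (t - i0) = t by omega] at this
        rcases le_or_gt i0 b with hcase | hcase
        · have h3 := hnn i0
          have h4 : (σ : ℤ) ≤ ((t - i0 : ℕ) : ℤ) := by
            have : σ ≤ t - i0 := by omega
            exact_mod_cast Nat.cast_le.mpr this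
          omega
        · have hdv : (σ : ℤ) ∣ PathSum s i0 := by
            apply dvd_pathSum hv hrm
            rcases hleft0 with h | h
            · exact Or.inl h
            · exact Or.inr (Or.inr (by rw [hall0 i0 le_rfl (by omega)]; exact h))
          have h5 := hbmax i0 hcase (by omega)
          have h6 : (σ : ℤ) ≤ PathSum s i0 := Int.le_of_dvd (by omega) hdv
          have h7 : (0 : ℤ) ≤ ((t - i0 : ℕ) : ℤ) := Int.natCast_nonneg _
          omega
      · exact absurd (heq.trans hval) hst1
      · -- inside a down-run: walk right to its end
        obtain ⟨e, hte, hen, hall2, hev⟩ := run_end s (-1) t n hval (by omega) (by rw [hzn]; norm_num)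
        have hps : PathSum s e = PathSum s t + (e - t : ℕ) * (-1) := by
          have := pathSum_seg s (-1) t (e - t) (fun u hu hu' => hall2 u hu (by omega))
          rwa [show t + (e - t) = e by omega] at this
        rcases eq_or_lt_of_le hen with hcase | hcase
        · rw [hcase, hend] at hps
          have : (σ : ℤ) ≤ ((e - t : ℕ) : ℤ) := by
            have : σ ≤ e - t := by omega
            exact_mod_cast Nat.cast_le.mpr this
          omega
        · have hdv : (σ : ℤ) ∣ PathSum s e := by
            apply dvd_pathSum hv hrm
            refine Or.inr (Or.inr ?_)
            rw [hall2 (e-1) (by omega) (by omega)]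
            exact fun hc => hev hc.symm
          have h5 := hbmax e (by omega) hcase
          have h6 : (σ : ℤ) ≤ PathSum s e := Int.le_of_dvd (by omega) hdv
          have h7 : (0 : ℤ) ≤ ((e - t : ℕ) : ℤ) := Int.natCast_nonneg _
          omega
  -- define the two pieces
  set Q : ℕ → ℤ := fun t => if t < b then s t else 0 with hQdef
  set P : ℕ → ℤ := fun t => if t < m then s (b+σ+t) else 0 with hPdef
  have hQle : ∀ t, t ≤ b → PathSum Q t = PathSum s t := by
    intro t ht
    refine Finset.sum_congr rfl fun u hu => ?_
    have : u < b := by have := Finset.mem_range.mp hu; omega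
    simp [hQdef, this]
  have hQge : ∀ t, b ≤ t → PathSum Q t = 0 := by
    intro t ht
    have h1 : PathSum Q (b + (t - b)) = PathSum Q b + (t - b : ℕ) * 0 := by
      refine pathSum_seg Q 0 b (t - b) fun u hu hu' => ?_
      simp [hQdef, Nat.not_lt.mpr hu]
    rw [show b + (t - b) = t by omega] at h1
    rw [h1, hQle b le_rfl, hb0]
    ring
  have hQmem : Q ∈ S j σ b := by
    refine ⟨⟨fun t => ?_, fun t ht => ?_, fun t => ?_, ?_⟩, fun t => ?_, ?_, ?_⟩
    · by_cases h : t < b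
      · simpa [hQdef, h] using hv t
      · simp [hQdef, h]
    · simp [hQdef, Nat.not_lt.mpr ht]
    · rcases le_or_gt t b with h | h
      · rw [hQle t h]; exact hnn t
      · rw [hQge t h.le]
    · rw [hQle b le_rfl, hb0]
    · rcases le_or_gt t b with h | h
      · rw [hQle t h]; exact hht t
      · rw [hQge t h.le]; positivity
    -- runs of Q, value 1
    · intro i₂ l₂ h₂
      obtain ⟨hl₂, hsteps, hleft, hright⟩ := h₂
      have hpos : ∀ t < l₂, i₂ + t < b ∧ s (i₂ + t) = 1 := by
        intro t ht
        have := hsteps t ht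
        by_cases h : i₂ + t < b
        · refine ⟨h, ?_⟩; simpa [hQdef, h] using this
        · simp [hQdef, h] at this
      have hend₂ : i₂ + l₂ ≤ b := by
        have := (hpos (l₂ - 1) (by omega)).1; omega
      refine hrm.1 i₂ l₂ ⟨hl₂, fun t ht => (hpos t ht).2, ?_, ?_⟩
      · rcases hleft with h | h
        · exact Or.inl h
        · refine Or.inr ?_
          have hib : i₂ - 1 < b := by omega
          simpa [hQdef, hib] using h
      · rcases lt_or_eq_of_le hend₂ with h | h
        · intro hc; exact hright (by simpa [hQdef, h] using hc)
        · intro _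
          have hble : 1 ≤ b := by omega
          have h9 := (hpos (l₂-1) (by omega)).2
          rw [show i₂ + (l₂ - 1) = b - 1 by omega] at h9
          exact hb1 hble h9
    -- runs of Q, value -1
    · intro i₂ l₂ h₂
      obtain ⟨hl₂, hsteps, hleft, hright⟩ := h₂
      have hpos : ∀ t < l₂, i₂ + t < b ∧ s (i₂ + t) = -1 := by
        intro t ht
        have := hsteps t ht
        by_cases h : i₂ + t < b
        · refine ⟨h, ?_⟩; simpa [hQdef, h] using this
        · simp [hQdef, h] at this
      have hend₂ : i₂ + l₂ ≤ b := by
        have := (hpos (l₂ - 1) (by omega)).1; omega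
      refine hrm.2 i₂ l₂ ⟨hl₂, fun t ht => (hpos t ht).2, ?_, ?_⟩
      · rcases hleft with h | h
        · exact Or.inl h
        · refine Or.inr ?_
          have hib : i₂ - 1 < b := by omega
          simpa [hQdef, hib] using h
      · rcases lt_or_eq_of_le hend₂ with h | h
        · intro hc; exact hright (by simpa [hQdef, h] using hc)
        · rw [h, hsb]; norm_num
  have hbσm : b + σ + m = n - σ := by omega
  have hPps : ∀ u, u ≤ m → PathSum P u = PathSum s (b+σ+u) - σ := by
    intro u hu
    induction u with
    | zero =>
      have h0 : PathSum P 0 = 0 := by simp [PathSum]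
      rw [h0, Nat.add_zero, hσpt]; ring
    | succ u ih =>
      rw [pathSum_succ, ih (by omega), show b+σ+(u+1) = (b+σ+u)+1 from rfl, pathSum_succ]
      have hum : u < m := by omega
      simp [hPdef, hum]
      ring
  have hPm : PathSum P m = 0 := by
    rw [hPps m le_rfl, hbσm, hnσ]; ring
  have hPge : ∀ u, m ≤ u → PathSum P u = 0 := by
    intro u hu
    have h1 : PathSum P (m + (u - m)) = PathSum P m + (u - m : ℕ) * 0 := by
      refine pathSum_seg P 0 m (u - m) fun w hw hw' => ?_
      simp [hPdef, Nat.not_lt.mpr hw]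
    rw [show m + (u - m) = u by omega] at h1
    rw [h1, hPm]; ring
  obtain ⟨k, hk⟩ : ∃ k, j = k + 2 := ⟨j - 2, by omega⟩
  have hmul : (σ * (j - 1) : ℕ) = σ * (j - 1 - 1) + σ := by
    subst hk; simp [Nat.mul_succ]
  have hPmem : P ∈ S (j-1) σ m := by
    refine ⟨⟨fun t => ?_, fun t ht => ?_, fun t => ?_, hPm⟩, fun t => ?_, ?_, ?_⟩
    · by_cases h : t < m
      · simpa [hPdef, h] using hv (b+σ+t)
      · simp [hPdef, h]
    · simp [hPdef, Nat.not_lt.mpr ht]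
    · rcases le_or_gt t m with h | h
      · rw [hPps t h]
        have := hC (b+σ+t) (by omega) (by omega)
        omega
      · rw [hPge t h.le]
    · rcases le_or_gt t m with h | h
      · rw [hPps t h]
        have h1 := hht (b+σ+t)
        rw [hmul] at h1
        push_cast at h1 ⊢
        omega
      · rw [hPge t h.le]; positivity
    -- runs of P, value 1
    · intro i₂ l₂ h₂
      obtain ⟨hl₂, hsteps, hleft, hright⟩ := h₂
      have hpos : ∀ t < l₂, i₂ + t < m ∧ s (b+σ+(i₂+t)) = 1 := by
        intro t ht
        have := hsteps t ht
        by_cases h : i₂ + t < m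
        · refine ⟨h, ?_⟩; simpa [hPdef, h] using this
        · simp [hPdef, h] at this
      have hend₂ : i₂ + l₂ ≤ m := by have := (hpos (l₂ - 1) (by omega)).1; omega
      have hright' : s (b+σ+(i₂+l₂)) ≠ 1 := by
        rcases lt_or_eq_of_le hend₂ with h | h
        · intro hc; exact hright (by simpa [hPdef, h] using hc)
        · rw [h, show b+σ+m = n - σ by omega, hD (n-σ) le_rfl (by omega)]
          norm_num
      rcases Nat.eq_zero_or_pos i₂ with hi₂ | hi₂
      · -- run extends back into the σ up-steps at b
        subst hi₂
        have hbig : IsMaxRun s 1 b (σ + l₂) := by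
          refine ⟨by omega, fun t ht => ?_, ?_, ?_⟩
          · rcases Nat.lt_or_ge t σ with h | h
            · exact hB t h
            · have := (hpos (t - σ) (by omega)).2
              rwa [show b+σ+(0+(t-σ)) = b + t by omega] at this
          · rcases Nat.eq_zero_or_pos b with h | h
            · exact Or.inl h
            · exact Or.inr (hb1 h)
          · rw [show b + (σ + l₂) = b+σ+(0+l₂) by omega]
            exact hright'
        have := hrm.1 b (σ + l₂) hbig
        exact (Nat.dvd_add_right (dvd_refl σ)).mp this
      · have hbig : IsMaxRun s 1 (b+σ+i₂) l₂ := by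
          refine ⟨hl₂, fun t ht => by
            have := (hpos t ht).2; rwa [show b+σ+(i₂+t) = b+σ+i₂+t by omega] at this, ?_, ?_⟩
          · refine Or.inr ?_
            have h9 : i₂ - 1 < m := by omega
            have := hleft.resolve_left (by omega)
            rw [show b+σ+i₂-1 = b+σ+(i₂-1) by omega]
            simpa [hPdef, h9] using this
          · rw [show b+σ+i₂+l₂ = b+σ+(i₂+l₂) by omega]
            exact hright'
        exact hrm.1 _ _ hbig
    -- runs of P, value -1
    · intro i₂ l₂ h₂
      obtain ⟨hl₂, hsteps, hleft, hright⟩ := h₂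
      have hpos : ∀ t < l₂, i₂ + t < m ∧ s (b+σ+(i₂+t)) = -1 := by
        intro t ht
        have := hsteps t ht
        by_cases h : i₂ + t < m
        · refine ⟨h, ?_⟩; simpa [hPdef, h] using this
        · simp [hPdef, h] at this
      have hend₂ : i₂ + l₂ ≤ m := by have := (hpos (l₂ - 1) (by omega)).1; omega
      have hleft' : s (b+σ+i₂-1) ≠ -1 := by
        rcases Nat.eq_zero_or_pos i₂ with hi₂ | hi₂
        · subst hi₂
          rw [show b+σ+0-1 = b + (σ-1) by omega, hB (σ-1) (by omega)]
          norm_num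
        · have h9 : i₂ - 1 < m := by omega
          have := hleft.resolve_left (by omega)
          rw [show b+σ+i₂-1 = b+σ+(i₂-1) by omega]
          simpa [hPdef, h9] using this
      rcases lt_or_eq_of_le hend₂ with hcase | hcase
      · have hbig : IsMaxRun s (-1) (b+σ+i₂) l₂ := by
          refine ⟨hl₂, fun t ht => by
            have := (hpos t ht).2; rwa [show b+σ+(i₂+t) = b+σ+i₂+t by omega] at this,
            Or.inr hleft', ?_⟩
          intro hc
          rw [show b+σ+i₂+l₂ = b+σ+(i₂+l₂) by omega] at hc
          exact hright (by simpa [hPdef, hcase] using hc)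
        exact hrm.2 _ _ hbig
      · -- run extends into the final σ down-steps
        have hbig : IsMaxRun s (-1) (b+σ+i₂) (l₂ + σ) := by
          refine ⟨by omega, fun t ht => ?_, Or.inr hleft', ?_⟩
          · rcases Nat.lt_or_ge t l₂ with h | h
            · have := (hpos t h).2
              rwa [show b+σ+(i₂+t) = b+σ+i₂+t by omega] at this
            · refine hD _ (by omega) (by omega)
          · rw [show b+σ+i₂+(l₂+σ) = n by omega, hzn]
            norm_num
        have := hrm.2 _ _ hbig
        exact (Nat.dvd_add_right (dvd_refl σ)).mp (by rwa [Nat.add_comm] at this)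
  refine ⟨b, m, hbm, hQmem, hPmem, funext fun t => ?_⟩
  by_cases h1 : t < b
  · simp [Phi, h1, hQdef]
  · by_cases h2 : t < b + σ
    · simp only [Phi, if_neg h1, if_pos h2]
      have := hB (t - b) (by omega)
      rwa [show b + (t - b) = t by omega] at this
    · by_cases h3 : t < b + σ + m
      · simp only [Phi, if_neg h1, if_neg h2, if_pos h3, hPdef]
        rw [if_pos (show t - (b+σ) < m by omega), show b+σ+(t-(b+σ)) = t by omega]
      · by_cases h4 : t < b + 2*σ + m
        · simp only [Phi, if_neg h1, if_neg h2, if_neg h3, if_pos h4]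
          exact hD t (by omega) (by omega)
        · simp only [Phi, if_neg h1, if_neg h2, if_neg h3, if_neg h4]
          exact hz t (by omega)

section PhiFacts
variable {σ b m : ℕ} {Q P : ℕ → ℤ}

lemma phi_A (h : t < b) : Phi σ b m Q P t = Q t := if_pos h
lemma phi_B (hσ : 1 ≤ σ) (h1 : b ≤ t) (h2 : t < b + σ) : Phi σ b m Q P t = 1 := by
  simp [Phi, Nat.not_lt.mpr h1, h2]
lemma phi_C (h : t < m) : Phi σ b m Q P (b + σ + t) = P t := by
  have h1 : ¬ (b + σ + t < b) := by omega
  have h2 : ¬ (b + σ + t < b + σ) := by omega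
  have h3 : b + σ + t < b + σ + m := by omega
  simp only [Phi, if_neg h1, if_neg h2, if_pos h3]
  congr 1
  omega
lemma phi_D (hσ : 1 ≤ σ) (h1 : b + σ + m ≤ t) (h2 : t < b + 2*σ + m) : Phi σ b m Q P t = -1 := by
  have ha : ¬ (t < b) := by omega
  have hb : ¬ (t < b + σ) := by omega
  have hc : ¬ (t < b + σ + m) := by omega
  simp [Phi, ha, hb, hc, h2]
lemma phi_E (h : b + 2*σ + m ≤ t) : Phi σ b m Q P t = 0 := by
  have ha : ¬ (t < b) := by omega
  have hb : ¬ (t < b + σ) := by omega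
  have hc : ¬ (t < b + σ + m) := by omega
  have hd : ¬ (t < b + 2*σ + m) := by omega
  simp [Phi, ha, hb, hc, hd]

lemma phi_psA (t : ℕ) (h : t ≤ b) : PathSum (Phi σ b m Q P) t = PathSum Q t :=
  Finset.sum_congr rfl fun u hu => phi_A (by have := Finset.mem_range.mp hu; omega)

lemma phi_psB (hσ : 1 ≤ σ) (hQb : PathSum Q b = 0) (u : ℕ) (hu : u ≤ σ) :
    PathSum (Phi σ b m Q P) (b + u) = u := by
  rw [pathSum_seg _ 1 b u (fun w hw hw' => phi_B hσ hw (by omega)),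
    phi_psA b le_rfl, hQb]
  ring

lemma phi_psC (hσ : 1 ≤ σ) (hQb : PathSum Q b = 0) (u : ℕ) (hu : u ≤ m) :
    PathSum (Phi σ b m Q P) (b + σ + u) = σ + PathSum P u := by
  have h1 : PathSum (Phi σ b m Q P) (b + σ + u) =
      PathSum (Phi σ b m Q P) (b + σ) + ∑ t ∈ Finset.range u, Phi σ b m Q P (b + σ + t) := by
    rw [show b + σ + u = (b+σ) + u from rfl]
    exact Finset.sum_range_add _ (b+σ) u
  rw [h1, show b + σ = b + σ from rfl, phi_psB hσ hQb σ le_rfl]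
  congr 1
  exact Finset.sum_congr rfl fun t ht => phi_C (by have := Finset.mem_range.mp ht; omega)

lemma phi_psD (hσ : 1 ≤ σ) (hQb : PathSum Q b = 0) (hPm : PathSum P m = 0) (u : ℕ) (hu : u ≤ σ) :
    PathSum (Phi σ b m Q P) (b + σ + m + u) = σ - u := by
  rw [pathSum_seg _ (-1) (b+σ+m) u (fun w hw hw' => phi_D hσ (by omega) (by omega)),
    show b + σ + m = b + σ + m from rfl, phi_psC hσ hQb m le_rfl, hPm]
  ring

lemma phi_psE (hσ : 1 ≤ σ) (hQb : PathSum Q b = 0) (hPm : PathSum P m = 0) (t : ℕ)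
    (ht : b + 2*σ + m ≤ t) : PathSum (Phi σ b m Q P) t = 0 := by
  set n := b + 2*σ + m with hn
  have h1 : PathSum (Phi σ b m Q P) (n + (t - n)) =
      PathSum (Phi σ b m Q P) n + (t - n : ℕ) * 0 :=
    pathSum_seg _ 0 n (t - n) (fun w hw hw' => phi_E (by omega))
  rw [show n + (t - n) = t by omega] at h1
  rw [h1]
  have h2 : PathSum (Phi σ b m Q P) (b + σ + m + σ) = σ - σ := phi_psD hσ hQb hPm σ le_rfl
  rw [show b + σ + m + σ = n by omega] at h2
  rw [h2]; ring

/-- heights of Φ strictly positive strictly between b and the end -/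
lemma phi_pos (hσ : 1 ≤ σ) (hQb : PathSum Q b = 0) (hPm : PathSum P m = 0)
    (hPnn : ∀ u, 0 ≤ PathSum P u) (t : ℕ) (h1 : b < t) (h2 : t < b + 2*σ + m) :
    1 ≤ PathSum (Phi σ b m Q P) t := by
  rcases Nat.lt_or_ge t (b + σ) with h | h
  · rw [show t = b + (t - b) by omega, phi_psB hσ hQb (t-b) (by omega)]
    omega
  · rcases Nat.lt_or_ge t (b + σ + m) with h' | h'
    · rw [show t = b + σ + (t - b - σ) by omega, phi_psC hσ hQb (t-b-σ) (by omega)]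
      have := hPnn (t - b - σ)
      omega
    · rw [show t = b + σ + m + (t - b - σ - m) by omega,
        phi_psD hσ hQb hPm (t-b-σ-m) (by omega)]
      omega

end PhiFacts

lemma phi_mem {j σ b m : ℕ} (hσ : 2 ≤ σ) (hj : 2 ≤ j) {Q P : ℕ → ℤ}
    (hQ : Q ∈ S j σ b) (hP : P ∈ S (j-1) σ m) :
    Phi σ b m Q P ∈ S j σ (b + 2*σ + m) ∧ Phi σ b m Q P (b + 2*σ + m - 1) = -1 := by
  obtain ⟨⟨hQv, hQz, hQnn, hQend⟩, hQht, hQrm⟩ := hQ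
  obtain ⟨⟨hPv, hPz, hPnn, hPend⟩, hPht, hPrm⟩ := hP
  have hσ1 : 1 ≤ σ := by omega
  set n := b + 2*σ + m with hn
  have hQb1 : 1 ≤ b → Q (b-1) ≠ 1 := by
    intro h hc
    have h1 : PathSum Q ((b-1)+1) = PathSum Q (b-1) + Q (b-1) := pathSum_succ Q (b-1)
    rw [show b - 1 + 1 = b by omega, hc, hQend] at h1
    have := hQnn (b-1)
    omega
  obtain ⟨k, hk⟩ : ∃ k, j = k + 2 := ⟨j - 2, by omega⟩
  have hmul : (σ * (j - 1) : ℕ) = σ * (j - 1 - 1) + σ := by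
    subst hk; simp [Nat.mul_succ]
  refine ⟨⟨⟨fun t => ?_, fun t ht => phi_E (by omega), fun t => ?_, ?_⟩, fun t => ?_, ?_, ?_⟩, ?_⟩
  · -- values
    by_cases h1 : t < b
    · rw [phi_A h1]; exact hQv t
    · by_cases h2 : t < b + σ
      · rw [phi_B hσ1 (by omega) h2]; tauto
      · by_cases h3 : t < b + σ + m
        · rw [show t = b + σ + (t - b - σ) by omega, phi_C (by omega)]
          exact hPv _
        · by_cases h4 : t < b + 2*σ + m
          · rw [phi_D hσ1 (by omega) h4]; tauto
          · rw [phi_E (by omega)]; tauto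
  · -- nonneg heights
    rcases Nat.lt_or_ge t (b+1) with h | h
    · rw [phi_psA t (by omega)]; exact hQnn t
    · rcases Nat.lt_or_ge t n with h' | h'
      · have := phi_pos hσ1 hQend hPend hPnn t (by omega) (by omega)
        omega
      · rw [phi_psE hσ1 hQend hPend t (by omega)]
  · -- ends at zero
    exact phi_psE hσ1 hQend hPend n le_rfl
  · -- height bound
    rcases Nat.lt_or_ge t (b+1) with h | h
    · rw [phi_psA t (by omega)]; exact hQht t
    · rcases Nat.lt_or_ge t (b + σ) with h2 | h2
      · rw [show t = b + (t - b) by omega, phi_psB hσ1 hQend (t-b) (by omega)]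
        have : (t - b : ℕ) ≤ σ := by omega
        rw [hmul]
        push_cast
        have := Nat.zero_le (σ * (j-1-1))
        omega
      · rcases Nat.lt_or_ge t (b + σ + m + 1) with h3 | h3
        · rw [show t = b + σ + (t - b - σ) by omega, phi_psC hσ1 hQend (t-b-σ) (by omega)]
          have := hPht (t - b - σ)
          rw [hmul]
          push_cast at this ⊢
          omega
        · rcases Nat.lt_or_ge t n with h4 | h4
          · rw [show t = b + σ + m + (t - b - σ - m) by omega,
              phi_psD hσ1 hQend hPend (t-b-σ-m) (by omega)]
            rw [hmul]
            push_cast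
            have := Nat.zero_le (σ * (j-1-1))
            omega
          · rw [phi_psE hσ1 hQend hPend t (by omega)]
            positivity
  · -- runs of value 1
    intro i l hrun
    obtain ⟨hl, hsteps, hleft, hright⟩ := hrun
    rcases Nat.lt_or_ge (i + l) (b + 1) with hcase | hcase
    · -- inside Q region
      refine hQrm.1 i l ⟨hl, fun t ht => ?_, ?_, ?_⟩
      · have := hsteps t ht
        rwa [phi_A (by omega)] at this
      · rcases hleft with h | h
        · exact Or.inl h
        · exact Or.inr (by rwa [phi_A (by omega)] at h)
      · rcases Nat.lt_or_ge (i + l) b with h | h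
        · intro hc; exact hright (by rwa [phi_A h])
        · have hib : i + l = b := by omega
          rw [hib, hQz b le_rfl]; norm_num
    · -- run meets positions ≥ b
      have hib : b ≤ i := by
        by_contra hc
        push_neg at hc
        have h1 : Phi σ b m Q P (b - 1) = 1 := by
          have := hsteps (b - 1 - i) (by omega)
          rwa [show i + (b - 1 - i) = b - 1 by omega] at this
        rw [phi_A (by omega)] at h1
        exact hQb1 (by omega) h1
      rcases Nat.lt_or_ge i (b + σ) with hi2 | hi2
      · -- starts within the up-block: must start exactly at b
        have hieq : i = b := by
          by_contra hc
          have h1 : Phi σ b m Q P (i - 1) = 1 := phi_B hσ1 (by omega) (by omega)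
          rcases hleft with h | h
          · omega
          · exact h h1
        have hlσ : σ ≤ l := by
          by_contra hc
          exact hright (phi_B hσ1 (by omega) (by omega))
        set l₀ := l - σ with hl₀
        rcases Nat.eq_zero_or_pos l₀ with h0 | h0
        · have : l = σ := by omega
          rw [this]
        · have hl₀m : l₀ ≤ m := by
            by_contra hc
            have h1 := hsteps (σ + m) (by omega)
            rw [phi_D hσ1 (by omega) (by omega)] at h1
            norm_num at h1
          have hPrun : IsMaxRun P 1 0 l₀ := by
            refine ⟨h0, fun t ht => ?_, Or.inl rfl, ?_⟩
            · have h1 := hsteps (σ + t) (by omega)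
              rw [show i + (σ + t) = b + σ + t by omega, phi_C (by omega)] at h1
              simpa using h1
            · rcases Nat.lt_or_ge l₀ m with h | h
              · intro hc
                refine hright ?_
                rw [show i + l = b + σ + l₀ by omega, phi_C h]
                simpa using hc
              · have : l₀ = m := by omega
                rw [Nat.zero_add, this, hPz m le_rfl]; norm_num
          have := hPrm.1 0 l₀ hPrun
          have h2 : σ ∣ σ + l₀ := (Nat.dvd_add_right (dvd_refl σ)).mpr this
          rwa [show σ + l₀ = l by omega] at h2
      · -- entirely within the P region
        have hi3 : b + σ < i := by
          rcases Nat.lt_or_ge (b + σ) i with h | h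
          · exact h
          · have hieq : i = b + σ := by omega
            exfalso
            have h1 : Phi σ b m Q P (i - 1) = 1 := by
              rw [hieq]; exact phi_B hσ1 (by omega) (by omega)
            rcases hleft with h' | h'
            · omega
            · exact h' h1
        have hilm : i + l ≤ b + σ + m := by
          by_contra hc
          push_neg at hc
          have h1 := hsteps (l - 1) (by omega)
          have h2 : b + σ + m ≤ i + (l - 1) := by omega
          rcases Nat.lt_or_ge (i + (l-1)) n with h | h
          · rw [phi_D hσ1 h2 h] at h1; norm_num at h1
          · rw [phi_E (by omega)] at h1; norm_num at h1
        have hPrun : IsMaxRun P 1 (i - b - σ) l := by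
          refine ⟨hl, fun t ht => ?_, Or.inr ?_, ?_⟩
          · have h1 := hsteps t ht
            rwa [show i + t = b + σ + (i - b - σ + t) by omega, phi_C (by omega)] at h1
          · have h1 : Phi σ b m Q P (i - 1) ≠ 1 := hleft.resolve_left (by omega)
            rwa [show i - 1 = b + σ + (i - b - σ - 1) by omega, phi_C (by omega),
              show i - b - σ - 1 = i - b - σ - 1 from rfl] at h1
          · rcases Nat.lt_or_ge (i + l) (b + σ + m) with h | h
            · intro hc
              refine hright ?_
              rw [show i + l = b + σ + (i - b - σ + l) by omega, phi_C (by omega)]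
              simpa using hc
            · have : i - b - σ + l = m := by omega
              rw [this, hPz m le_rfl]; norm_num
        exact hPrm.1 _ _ hPrun
  · -- runs of value -1
    intro i l hrun
    obtain ⟨hl, hsteps, hleft, hright⟩ := hrun
    rcases Nat.lt_or_ge (i + l) (b + 1) with hcase | hcase
    · refine hQrm.2 i l ⟨hl, fun t ht => ?_, ?_, ?_⟩
      · have := hsteps t ht
        rwa [phi_A (by omega)] at this
      · rcases hleft with h | h
        · exact Or.inl h
        · exact Or.inr (by rwa [phi_A (by omega)] at h)
      · rcases Nat.lt_or_ge (i + l) b with h | h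
        · intro hc; exact hright (by rwa [phi_A h])
        · have hib : i + l = b := by omega
          rw [hib, hQz b le_rfl]; norm_num
    · -- run meets positions ≥ b: all its positions are ≥ b+σ
      have hib : b + σ ≤ i := by
        by_contra hc
        push_neg at hc
        rcases Nat.lt_or_ge i b with h | h
        · -- would contain position b, which has value 1
          have h1 := hsteps (b - i) (by omega)
          rw [show i + (b - i) = b by omega, phi_B hσ1 le_rfl (by omega)] at h1
          norm_num at h1
        · have h1 := hsteps 0 hl
          rw [Nat.add_zero, phi_B hσ1 h (by omega)] at h1
          norm_num at h1
      have hleft' : i - b - σ = 0 ∨ P (i - b - σ - 1) ≠ -1 := by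
        rcases Nat.eq_or_lt_of_le hib with h | h
        · exact Or.inl (by omega)
        · refine Or.inr ?_
          have h1 : Phi σ b m Q P (i - 1) ≠ -1 := by
            rcases hleft with h' | h'
            · omega
            · exact h'
          rcases Nat.lt_or_ge (i - 1) (b + σ) with h2 | h2
          · omega
          · rcases Nat.lt_or_ge (i - 1) (b + σ + m) with h3 | h3
            · rwa [show i - 1 = b + σ + (i - b - σ - 1) by omega, phi_C (by omega)] at h1
            · exfalso
              have h4 := hsteps 0 hl
              rw [Nat.add_zero] at h4
              rcases Nat.lt_or_ge i n with h5 | h5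
              · exact h1 (phi_D hσ1 (by omega) (by omega))
              · rw [phi_E (by omega)] at h4; norm_num at h4
      rcases Nat.lt_or_ge (i + l) (b + σ + m + 1) with hcase2 | hcase2
      · -- entirely within P region, not touching the final block
        have hcase3 : i + l < b + σ + m := by
          rcases Nat.lt_or_ge (i + l) (b + σ + m) with h | h
          · exact h
          · exfalso
            refine hright ?_
            exact phi_D hσ1 (by omega) (by omega)
        have hPrun : IsMaxRun P (-1) (i - b - σ) l := by
          refine ⟨hl, fun t ht => ?_, hleft', ?_⟩
          · have h1 := hsteps t ht
            rwa [show i + t = b + σ + (i - b - σ + t) by omega, phi_C (by omega)] at h1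
          · intro hc
            refine hright ?_
            rw [show i + l = b + σ + (i - b - σ + l) by omega, phi_C (by omega)]
            simpa using hc
        exact hPrm.2 _ _ hPrun
      · -- reaches into the final down-block: must end exactly at n
        have hiln : i + l = n := by
          have h1 : i + l ≤ n := by
            by_contra hc
            push_neg at hc
            have h2 := hsteps (l - 1) (by omega)
            rcases Nat.lt_or_ge (i + (l-1)) n with h | h
            · omega
            · rw [phi_E (by omega)] at h2; norm_num at h2
          rcases Nat.eq_or_lt_of_le h1 with h | h
          · exact h
          · exfalso
            exact hright (phi_D hσ1 (by omega) h)
        have him : i ≤ b + σ + m := by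
          by_contra hc
          push_neg at hc
          have h1 : Phi σ b m Q P (i - 1) = -1 := phi_D hσ1 (by omega) (by omega)
          rcases hleft with h' | h'
          · omega
          · exact h' h1
        set l₁ := b + σ + m - i with hl₁
        rcases Nat.eq_zero_or_pos l₁ with h0 | h0
        · have : l = σ := by omega
          rw [this]
        · have hPrun : IsMaxRun P (-1) (i - b - σ) l₁ := by
            refine ⟨h0, fun t ht => ?_, hleft', ?_⟩
            · have h1 := hsteps t (by omega)
              rwa [show i + t = b + σ + (i - b - σ + t) by omega, phi_C (by omega)] at h1
            · have : i - b - σ + l₁ = m := by omega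
              rw [this, hPz m le_rfl]; norm_num
          have := hPrm.2 _ _ hPrun
          have h2 : σ ∣ l₁ + σ := Dvd.dvd.add this (dvd_refl σ)
          rwa [show l₁ + σ = l by omega] at h2
  · exact phi_D hσ1 (by omega) (by omega)

lemma phi_inj {j σ : ℕ} (hσ : 2 ≤ σ) {b m b' m' : ℕ} {Q P Q' P' : ℕ → ℤ}
    (hQ : Q ∈ S j σ b) (hP : P ∈ S (j-1) σ m) (hQ' : Q' ∈ S j σ b') (hP' : P' ∈ S (j-1) σ m')
    (hnn : b + 2*σ + m = b' + 2*σ + m')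
    (heq : Phi σ b m Q P = Phi σ b' m' Q' P') : b = b' ∧ Q = Q' ∧ P = P' := by
  have hσ1 : 1 ≤ σ := by omega
  obtain ⟨⟨hQv, hQz, hQnn, hQend⟩, hQht, hQrm⟩ := hQ
  obtain ⟨⟨hPv, hPz, hPnn, hPend⟩, hPht, hPrm⟩ := hP
  obtain ⟨⟨hQv', hQz', hQnn', hQend'⟩, hQht', hQrm'⟩ := hQ'
  obtain ⟨⟨hPv', hPz', hPnn', hPend'⟩, hPht', hPrm'⟩ := hP'
  have key : ∀ (b₁ m₁ b₂ m₂ : ℕ) (Q₁ P₁ Q₂ P₂ : ℕ → ℤ),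
      PathSum Q₁ b₁ = 0 → PathSum P₁ m₁ = 0 → (∀ u, 0 ≤ PathSum P₁ u) →
      PathSum Q₂ b₂ = 0 →
      b₁ + 2*σ + m₁ = b₂ + 2*σ + m₂ →
      Phi σ b₁ m₁ Q₁ P₁ = Phi σ b₂ m₂ Q₂ P₂ → ¬ (b₁ < b₂) := by
    intro b₁ m₁ b₂ m₂ Q₁ P₁ Q₂ P₂ hq1 hp1 hp1nn hq2 hsum he hlt
    have h1 : PathSum (Phi σ b₂ m₂ Q₂ P₂) b₂ = 0 := by
      rw [phi_psA b₂ le_rfl, hq2]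
    have h2 : 1 ≤ PathSum (Phi σ b₁ m₁ Q₁ P₁) b₂ :=
      phi_pos hσ1 hq1 hp1 hp1nn b₂ hlt (by omega)
    rw [he, h1] at h2
    omega
  have hbb : b = b' := by
    rcases Nat.lt_trichotomy b b' with h | h | h
    · exact absurd h (key b m b' m' Q P Q' P' hQend hPend hPnn hQend' hnn heq)
    · exact h
    · exact absurd h (key b' m' b m Q' P' Q P hQend' hPend' hPnn' hQend hnn.symm heq.symm)
  subst hbb
  have hmm : m = m' := by omega
  subst hmm
  refine ⟨rfl, funext fun t => ?_, funext fun t => ?_⟩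
  · rcases Nat.lt_or_ge t b with h | h
    · have := congrFun heq t
      rwa [phi_A h, phi_A h] at this
    · rw [hQz t h, hQz' t h]
  · rcases Nat.lt_or_ge t m with h | h
    · have := congrFun heq (b + σ + t)
      rwa [phi_C h, phi_C h] at this
    · rw [hPz t h, hPz' t h]

lemma ncard_biUnion {α β : Type*} (u : Finset β) (t : β → Set α)
    (hf : ∀ b ∈ u, (t b).Finite)
    (hd : ∀ x ∈ u, ∀ y ∈ u, x ≠ y → Disjoint (t x) (t y)) :
    (⋃ b ∈ u, t b).ncard = ∑ b ∈ u, (t b).ncard := by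
  classical
  induction u using Finset.induction with
  | empty => simp
  | @insert a u ha ih =>
    have hfinU : (⋃ b ∈ u, t b).Finite := by
      apply Set.Finite.biUnion u.finite_toSet
      intro b hb
      exact hf b (Finset.mem_insert_of_mem hb)
    have hdj : Disjoint (t a) (⋃ b ∈ u, t b) := by
      rw [Set.disjoint_iUnion_right]
      intro b
      rw [Set.disjoint_iUnion_right]
      intro hb
      exact hd a (Finset.mem_insert_self a u) b (Finset.mem_insert_of_mem hb)
        (fun hc => ha (hc ▸ hb))
    rw [Finset.set_biUnion_insert, Finset.sum_insert ha,
      Set.ncard_union_eq hdj (hf a (Finset.mem_insert_self a u)) hfinU,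
      ih (fun b hb => hf b (Finset.mem_insert_of_mem hb))
        (fun x hx y hy hxy => hd x (Finset.mem_insert_of_mem hx) y
          (Finset.mem_insert_of_mem hy) hxy)]

lemma ncard_prod {α β : Type*} (A : Set α) (B : Set β) :
    (A ×ˢ B).ncard = A.ncard * B.ncard := by
  rw [← Nat.card_coe_set_eq, ← Nat.card_coe_set_eq, ← Nat.card_coe_set_eq,
    ← Nat.card_prod]
  exact Nat.card_congr (Equiv.Set.prod A B)

lemma mu_eq (j σ n : ℕ) : muPath j σ n = (S j σ n).ncard := rfl

lemma S_pred {j σ n : ℕ} (hn : 1 ≤ n) :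
    S j σ (n-1) = {s ∈ S j σ n | s (n-1) = 0} := by
  ext s
  constructor
  · rintro ⟨⟨hv, hz, hnn, hend⟩, hht, hrm⟩
    have hz' : s (n-1) = 0 := hz (n-1) le_rfl
    refine ⟨⟨⟨hv, fun t ht => hz t (by omega), hnn, ?_⟩, hht, hrm⟩, hz'⟩
    rw [show n = (n-1) + 1 by omega, pathSum_succ, hend, hz']
    ring
  · rintro ⟨⟨⟨hv, hz, hnn, hend⟩, hht, hrm⟩, hlast⟩
    refine ⟨⟨hv, fun t ht => ?_, hnn, ?_⟩, hht, hrm⟩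
    · rcases Nat.eq_or_lt_of_le ht with h | h
      · rwa [← h]
      · exact hz t (by omega)
    · have : PathSum s ((n-1)+1) = PathSum s (n-1) + s (n-1) := pathSum_succ s (n-1)
      rw [show n - 1 + 1 = n by omega, hend, hlast] at this
      omega

lemma S_last {j σ n : ℕ} (hn : 1 ≤ n) {s : ℕ → ℤ} (hs : s ∈ S j σ n) :
    s (n-1) = 0 ∨ s (n-1) = -1 := by
  obtain ⟨⟨hv, hz, hnn, hend⟩, hht, hrm⟩ := hs
  have h1 : PathSum s ((n-1)+1) = PathSum s (n-1) + s (n-1) := pathSum_succ s (n-1)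
  rw [show n - 1 + 1 = n by omega, hend] at h1
  have := hnn (n-1)
  rcases hv (n-1) with h | h | h
  · omega
  · exact Or.inl h
  · exact Or.inr h

lemma mu_rec {j σ : ℕ} (hσ : 2 ≤ σ) (hj : 2 ≤ j) (n : ℕ) (hn : 1 ≤ n) :
    muPath j σ n = muPath j σ (n-1) +
      (if 2*σ ≤ n then
        ∑ b ∈ Finset.range (n - 2*σ + 1), muPath j σ b * muPath (j-1) σ (n - 2*σ - b)
      else 0) := by
  classical
  set Neg : Set (ℕ → ℤ) := {s ∈ S j σ n | s (n-1) = -1} with hNeg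
  have hsplit : S j σ n = S j σ (n-1) ∪ Neg := by
    ext s
    constructor
    · intro hs
      rcases S_last hn hs with h | h
      · exact Or.inl (by rw [S_pred hn]; exact ⟨hs, h⟩)
      · exact Or.inr ⟨hs, h⟩
    · rintro (h | h)
      · rw [S_pred hn] at h; exact h.1
      · exact h.1
  have hdisj : Disjoint (S j σ (n-1)) Neg := by
    rw [Set.disjoint_left]
    intro s hs1 hs2
    rw [S_pred hn] at hs1
    have := hs1.2
    have := hs2.2
    omega
  have hNegfin : Neg.Finite := Set.Finite.subset (S_finite j σ n) (fun s hs => hs.1)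
  have h1 : muPath j σ n = muPath j σ (n-1) + Neg.ncard := by
    rw [mu_eq, mu_eq, hsplit, Set.ncard_union_eq hdisj (S_finite j σ (n-1)) hNegfin]
  rw [h1]
  congr 1
  by_cases h2σ : 2*σ ≤ n
  · rw [if_pos h2σ]
    set F : ℕ → Set (ℕ → ℤ) := fun b =>
      (fun qp : (ℕ → ℤ) × (ℕ → ℤ) => Phi σ b (n - 2*σ - b) qp.1 qp.2) ''
        ((S j σ b) ×ˢ (S (j-1) σ (n - 2*σ - b))) with hF
    have hmem : ∀ b, b ≤ n - 2*σ → F b ⊆ Neg := by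
      rintro b hb x ⟨⟨q, p⟩, ⟨hq, hp⟩, rfl⟩
      have := phi_mem hσ hj hq hp
      rw [show b + 2*σ + (n - 2*σ - b) = n by omega] at this
      exact ⟨this.1, this.2⟩
    have hcover : Neg = ⋃ b ∈ Finset.range (n - 2*σ + 1), F b := by
      ext s
      constructor
      · rintro ⟨hs, hlast⟩
        obtain ⟨b, m, hbm, hQ, hP, heq⟩ := decomp hσ hj hs hn hlast
        have hm : m = n - 2*σ - b := by omega
        subst hm
        refine Set.mem_biUnion (s := Finset.range (n - 2*σ + 1)) (t := F)
          (Finset.mem_range.mpr (show b < n - 2*σ + 1 by omega)) ?_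
        exact ⟨⟨_, _⟩, ⟨hQ, hP⟩, heq.symm⟩
      · intro hs
        obtain ⟨b, hb, hsb⟩ := Set.mem_iUnion₂.mp hs
        exact hmem b (by have := Finset.mem_range.mp hb; omega) hsb
    have hfin : ∀ b ∈ Finset.range (n - 2*σ + 1), (F b).Finite := by
      intro b hb
      exact Set.Finite.image _ (Set.Finite.prod (S_finite _ _ _) (S_finite _ _ _))
    have hdisj2 : ∀ x ∈ Finset.range (n - 2*σ + 1), ∀ y ∈ Finset.range (n - 2*σ + 1),
        x ≠ y → Disjoint (F x) (F y) := by
      intro x hx y hy hxy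
      rw [Set.disjoint_left]
      rintro s ⟨⟨q, p⟩, ⟨hq, hp⟩, rfl⟩ ⟨⟨q', p'⟩, ⟨hq', hp'⟩, heq⟩
      replace heq : Phi σ y (n - 2*σ - y) q' p' = Phi σ x (n - 2*σ - x) q p := heq
      exact hxy ((phi_inj hσ hq' hp' hq hp
        (by have := Finset.mem_range.mp hx; have := Finset.mem_range.mp hy; omega) heq).1).symm
    rw [hcover, ncard_biUnion _ _ hfin hdisj2]
    refine Finset.sum_congr rfl fun b hb => ?_
    have hinj : Set.InjOn (fun qp : (ℕ → ℤ) × (ℕ → ℤ) => Phi σ b (n - 2*σ - b) qp.1 qp.2)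
        ((S j σ b) ×ˢ (S (j-1) σ (n - 2*σ - b))) := by
      rintro ⟨q, p⟩ ⟨hq, hp⟩ ⟨q', p'⟩ ⟨hq', hp'⟩ heq
      replace heq : Phi σ b (n - 2*σ - b) q p = Phi σ b (n - 2*σ - b) q' p' := heq
      obtain ⟨-, h1, h2⟩ := phi_inj hσ hq hp hq' hp' rfl heq
      simp only [Prod.mk.injEq]
      exact ⟨h1, h2⟩
    rw [hF]
    simp only
    rw [Set.ncard_image_of_injOn hinj, ncard_prod, mu_eq, mu_eq]
  · rw [if_neg h2σ]
    have : Neg = ∅ := by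
      rw [Set.eq_empty_iff_forall_notMem]
      rintro s ⟨hs, hlast⟩
      obtain ⟨b, m, hbm, -, -, -⟩ := decomp hσ hj hs hn hlast
      omega
    rw [this]
    simp

lemma zero_mem_S (j σ n : ℕ) : (fun _ => (0:ℤ)) ∈ S j σ n := by
  refine ⟨⟨fun t => Or.inr (Or.inl rfl), fun t ht => rfl, fun m => ?_, ?_⟩,
    fun m => ?_, ?_, ?_⟩
  · simp [PathSum]
  · simp [PathSum]
  · simp only [PathSum, Finset.sum_const_zero]
    positivity
  · rintro i l ⟨hl, hsteps, -, -⟩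
    have := hsteps 0 hl
    norm_num at this
  · rintro i l ⟨hl, hsteps, -, -⟩
    have := hsteps 0 hl
    norm_num at this

lemma S_zero (j σ : ℕ) : S j σ 0 = {fun _ => 0} := by
  ext s
  constructor
  · rintro ⟨⟨hv, hz, hnn, hend⟩, hht, hrm⟩
    exact funext fun t => hz t (Nat.zero_le t)
  · rintro rfl
    exact zero_mem_S j σ 0

lemma S_one (σ n : ℕ) : S 1 σ n = {fun _ => 0} := by
  ext s
  constructor
  · rintro ⟨⟨hv, hz, hnn, hend⟩, hht, hrm⟩
    have hps : ∀ m, PathSum s m = 0 := by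
      intro m
      have h1 := hht m
      have h2 := hnn m
      simp at h1
      omega
    funext t
    have h1 := hps t
    have h2 := hps (t+1)
    rw [pathSum_succ] at h2
    omega
  · rintro rfl
    exact zero_mem_S 1 σ n

lemma mu_zero (j σ : ℕ) : muPath j σ 0 = 1 := by
  rw [mu_eq, S_zero, Set.ncard_singleton]

lemma mu_one (σ n : ℕ) : muPath 1 σ n = 1 := by
  rw [mu_eq, S_one, Set.ncard_singleton]

lemma coeff_X_pow_mul' (f : PowerSeries ℚ) (k n : ℕ) :
    PowerSeries.coeff n (PowerSeries.X ^ k * f) =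
      if k ≤ n then PowerSeries.coeff (n - k) f else 0 := by
  rcases le_or_gt k n with h | h
  · have h2 := PowerSeries.coeff_X_pow_mul f k (n - k)
    rw [show n - k + k = n by omega] at h2
    rw [if_pos h, h2]
  · rw [if_neg (by omega), PowerSeries.coeff_mul]
    apply Finset.sum_eq_zero
    rintro ⟨a, c⟩ hab
    have : a + c = n := Finset.HasAntidiagonal.mem_antidiagonal.mp hab
    rw [PowerSeries.coeff_X_pow, if_neg (by omega), zero_mul]

theorem statement9' (j σ : ℕ) (hj : 2 ≤ j) (hσ : 2 ≤ σ) :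
    Gpath j σ * (1 - PowerSeries.X - PowerSeries.X ^ (2 * σ) * Gpath (j - 1) σ) = 1 ∧
    Gpath 1 σ * (1 - PowerSeries.X) = 1 := by
  constructor
  · have h : Gpath j σ = 1 + PowerSeries.X * Gpath j σ +
        PowerSeries.X ^ (2*σ) * (Gpath (j-1) σ * Gpath j σ) := by
      ext n
      rcases n with _ | n
      · rw [map_add, map_add, coeff_X_pow_mul', if_neg (show ¬ 2*σ ≤ 0 by omega)]
        have hX : PowerSeries.coeff 0 (PowerSeries.X * Gpath j σ) = 0 := by
          simpa using coeff_X_pow_mul' (Gpath j σ) 1 0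
        rw [hX, Gpath, PowerSeries.coeff_mk, mu_zero]
        simp
      · rw [map_add, map_add, PowerSeries.coeff_succ_X_mul, coeff_X_pow_mul',
          PowerSeries.coeff_one, if_neg (Nat.succ_ne_zero n)]
        have hcG : ∀ j' n', PowerSeries.coeff n' (Gpath j' σ) = (muPath j' σ n' : ℚ) :=
          fun j' n' => PowerSeries.coeff_mk n' _
        rw [hcG, hcG]
        have hrec := mu_rec hσ hj (n+1) (by omega)
        rw [show n + 1 - 1 = n from rfl] at hrec
        by_cases h2σ : 2*σ ≤ n + 1
        · rw [if_pos h2σ] at hrec ⊢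
          rw [PowerSeries.coeff_mul, Finset.Nat.sum_antidiagonal_eq_sum_range_succ_mk]
          simp only [hcG, Nat.succ_eq_add_one]
          have hsum : ∑ k ∈ Finset.range (n + 1 - 2*σ + 1),
              (muPath (j-1) σ k : ℚ) * (muPath j σ (n + 1 - 2*σ - k) : ℚ) =
              ∑ b ∈ Finset.range (n + 1 - 2*σ + 1),
                ((muPath j σ b : ℚ) * (muPath (j-1) σ (n + 1 - 2*σ - b) : ℚ)) := by
            rw [← Finset.sum_range_reflect]
            refine Finset.sum_congr rfl fun i hi => ?_
            have hi' := Finset.mem_range.mp hi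
            rw [show n + 1 - 2*σ + 1 - 1 - i = n + 1 - 2*σ - i by omega,
              show n + 1 - 2*σ - (n + 1 - 2*σ - i) = i by omega]
            ring
          rw [hsum, hrec]
          push_cast
          ring
        · rw [if_neg h2σ] at hrec ⊢
          rw [hrec]
          push_cast
          ring
    linear_combination h
  · have h1 : ∀ n, PowerSeries.coeff n (Gpath 1 σ) = 1 := by
      intro n
      rw [Gpath, PowerSeries.coeff_mk, mu_one]
      norm_num
    ext n
    rw [mul_sub, mul_one, map_sub]
    rcases n with _ | n
    · have : Gpath 1 σ * PowerSeries.X = PowerSeries.X * Gpath 1 σ := mul_comm _ _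
      rw [this]
      have h2 : PowerSeries.coeff 0 (PowerSeries.X * Gpath 1 σ) = 0 := by
        have := coeff_X_pow_mul' (Gpath 1 σ) 1 0
        simpa using this
      rw [h2, h1]
      simp
    · rw [PowerSeries.coeff_succ_mul_X, h1, h1, PowerSeries.coeff_one,
        if_neg (Nat.succ_ne_zero n)]
      ring

end St9

/-- For `j ≥ 2` and `σ ≥ 2`, as formal power series over `ℚ`:
`G_{j,σ}(z)·(1 - z - z^(2σ)·G_{j-1,σ}(z)) = 1`, i.e.
`G_{j,σ}(z) = 1/(1 - z - z^(2σ) G_{j-1,σ}(z))`, with `G_{1,σ}(z) = 1/(1-z)`. -/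


theorem statement9 (j σ : ℕ) (hj : 2 ≤ j) (hσ : 2 ≤ σ) :
    Gpath j σ * (1 - PowerSeries.X - PowerSeries.X ^ (2 * σ) * Gpath (j - 1) σ) = 1 ∧
    Gpath 1 σ * (1 - PowerSeries.X) = 1 :=
  St9.statement9' j σ hj hσ
end

section
/- Let σ ≥ 2 and k ≥ 2, and let ζ be a Motzkin path of length n in which every maximal run of up-steps and every maximal run of down-steps has length a positive multiple of σ. Group the up-steps and down-steps into consecutive σ-blocks and pair, from left to right, each σ-block of up-steps with the first subsequent unpaired σ-block of down-steps; each paired pair of blocks, with up-steps at positions i,i+1,…,i+σ−1 and down-steps at positions j−σ+1,…,j (positions read along [n]), determines the stack of arcs (i+σ−1,j−σ+1),…,(i,j). Then this pairing is well defined and the resulting diagram δ_ζ over [n] is a σ-canonical diagram whose core has no two nested arcs; moreover δ_ζ is k-noncrossing if and only if the height of ζ is less than σk (equivalently, at most σ(k−1)). -/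
open Classical

/-- The arcs kept when collapsing each stack to a single arc (innermost representative). -/
noncomputable def keptArcs (D : Finset (ℕ × ℕ)) : Finset (ℕ × ℕ) :=
  D.filter fun a => (a.1 + 1, a.2 - 1) ∉ D

/-- The vertices of `[n]` surviving the collapse of stacks: the unpaired vertices together
with the endpoints of the kept arcs. -/
noncomputable def coreVerts (n : ℕ) (D : Finset (ℕ × ℕ)) : Finset ℕ :=
  (Finset.Icc 1 n).filter fun r => Unpaired D r ∨ ∃ a ∈ keptArcs D, a.1 = r ∨ a.2 = r

/-- The relabeling map of the core: a surviving vertex `r` gets the label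
`#{surviving vertices ≤ r}`. -/
noncomputable def coreRank (n : ℕ) (D : Finset (ℕ × ℕ)) (r : ℕ) : ℕ :=
  ((coreVerts n D).filter fun v => v ≤ r).card

/-- The core `c(S)` of a diagram: collapse each stack to a single arc and relabel. -/
noncomputable def coreDiagram (n : ℕ) (D : Finset (ℕ × ℕ)) : Finset (ℕ × ℕ) :=
  (keptArcs D).image fun a => (coreRank n D a.1, coreRank n D a.2)

/-- The up-rank of position `p`: the number of up-steps strictly before `p`. -/
noncomputable def upRank (s : ℕ → ℤ) (p : ℕ) : ℕ :=
  ((Finset.range p).filter fun q => s q = 1).card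

/-- The down-rank of position `p`: the number of down-steps strictly before `p`. -/
noncomputable def downRank (s : ℕ → ℤ) (p : ℕ) : ℕ :=
  ((Finset.range p).filter fun q => s q = -1).card

/-- The diagram `δ_ζ` over `[n]` induced by a path `s` whose up- and down-runs come in
`σ`-blocks: pairing, from left to right, each `σ`-block of up-steps with the first
subsequent unpaired `σ`-block of down-steps (i.e. the `b`-th up-block with the `b`-th
down-block), a block-pair with up-steps at `i,…,i+σ-1` and down-steps at `j-σ+1,…,j`
contributes the stack of arcs `(i+σ-1,j-σ+1),…,(i,j)`. -/
noncomputable def pathDiagram (σ n : ℕ) (s : ℕ → ℤ) : Finset (ℕ × ℕ) :=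
  ((Finset.Icc 1 n) ×ˢ (Finset.Icc 1 n)).filter fun a =>
    s (a.1 - 1) = 1 ∧ s (a.2 - 1) = -1 ∧
    upRank s (a.1 - 1) / σ = downRank s (a.2 - 1) / σ ∧
    upRank s (a.1 - 1) % σ + downRank s (a.2 - 1) % σ = σ - 1

namespace S12
noncomputable def rk (s : ℕ → ℤ) (v : ℤ) (m : ℕ) : ℕ :=
  ((Finset.range m).filter fun q => s q = v).card

lemma rk_succ (s : ℕ → ℤ) (v : ℤ) (m : ℕ) :
    rk s v (m + 1) = rk s v m + if s m = v then 1 else 0 := by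
  unfold rk
  rw [Finset.range_add_one, Finset.filter_insert]
  split <;> simp [Finset.card_insert_of_notMem]

lemma rk_mono (s : ℕ → ℤ) (v : ℤ) {m m' : ℕ} (h : m ≤ m') : rk s v m ≤ rk s v m' := by
  apply Finset.card_le_card
  intro x hx
  simp only [Finset.mem_filter, Finset.mem_range] at *
  exact ⟨lt_of_lt_of_le hx.1 h, hx.2⟩

lemma rk_lt_of (s : ℕ → ℤ) (v : ℤ) {p m : ℕ} (hp : s p = v) (h : p < m) :
    rk s v p < rk s v m := by
  have h1 : rk s v (p+1) = rk s v p + 1 := by rw [rk_succ, if_pos hp]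
  have h2 : rk s v (p+1) ≤ rk s v m := rk_mono s v h
  omega

lemma pos_lt_of_rk_lt (s : ℕ → ℤ) (v : ℤ) {p m : ℕ} (h : rk s v p < rk s v m) : p < m := by
  by_contra hc
  exact absurd (rk_mono s v (not_lt.mp hc)) (by omega)

lemma exists_pos (s : ℕ → ℤ) (v : ℤ) {r m : ℕ} (h : r < rk s v m) :
    ∃ p < m, s p = v ∧ rk s v p = r := by
  induction m with
  | zero => simp [rk] at h
  | succ m ih =>
    rw [rk_succ] at h
    by_cases hv : s m = v
    · rw [if_pos hv] at h
      rcases lt_or_ge r (rk s v m) with h' | h'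
      · obtain ⟨p, hp1, hp2, hp3⟩ := ih h'
        exact ⟨p, by omega, hp2, hp3⟩
      · exact ⟨m, by omega, hv, by omega⟩
    · rw [if_neg hv] at h
      obtain ⟨p, hp1, hp2, hp3⟩ := ih (by omega)
      exact ⟨p, by omega, hp2, hp3⟩

lemma pos_unique (s : ℕ → ℤ) (v : ℤ) {p q : ℕ} (hp : s p = v) (hq : s q = v)
    (h : rk s v p = rk s v q) : p = q := by
  rcases lt_trichotomy p q with h' | h' | h'
  · exact absurd (rk_lt_of s v hp h') (by omega)
  · exact h'
  · exact absurd (rk_lt_of s v hq h') (by omega)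

lemma rk_run (s : ℕ → ℤ) (v : ℤ) (a : ℕ) : ∀ d, (∀ t < d, s (a + t) = v) →
    rk s v (a + d) = rk s v a + d := by
  intro d
  induction d with
  | zero => simp
  | succ d ih =>
    intro h
    have : a + (d+1) = (a + d) + 1 := by omega
    rw [this, rk_succ, if_pos (h d (by omega)), ih (fun t ht => h t (by omega))]
    omega

lemma rk_flat (s : ℕ → ℤ) (v : ℤ) (a : ℕ) : ∀ d, (∀ t < d, s (a + t) ≠ v) →
    rk s v (a + d) = rk s v a := by
  intro d
  induction d with
  | zero => simp
  | succ d ih =>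
    intro h
    have : a + (d+1) = (a + d) + 1 := by omega
    rw [this, rk_succ, if_neg (h d (by omega)), ih (fun t ht => h t (by omega))]
    omega

lemma rk_dvd (σ : ℕ) (s : ℕ → ℤ) (v : ℤ) (hr : ∀ i l, IsMaxRun s v i l → σ ∣ l) :
    ∀ m, s m ≠ v → σ ∣ rk s v m := by
  intro m
  induction m using Nat.strong_induction_on with
  | _ m ih =>
    intro hm
    by_cases hex : ∃ p, p < m ∧ s p = v
    · -- take the greatest such p
      classical
      obtain ⟨p0, hp0⟩ := hex
      set P := (Finset.range m).filter fun q => s q = v with hP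
      have hne : P.Nonempty := ⟨p0, by simp [hP, hp0.1, hp0.2]⟩
      set p := P.max' hne with hpdef
      have hpmem : p ∈ P := P.max'_mem hne
      have hpm : p < m := by simpa [hP] using (Finset.mem_filter.mp hpmem).1 |> Finset.mem_range.mp
      have hpv : s p = v := (Finset.mem_filter.mp hpmem).2
      have hpmax : ∀ q, p < q → q < m → s q ≠ v := by
        intro q h1 h2 hv
        have : q ∈ P := by simp [hP, h2, hv]
        exact absurd (P.le_max' q this) (by omega)
      -- least start of the run
      have hPp : ∀ t, p ≤ t ∧ t ≤ p → s t = v := by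
        intro t ht
        have ht' : t = p := by omega
        rw [ht']
        exact hpv
      set Q : ℕ → Prop := fun i => ∀ t, i ≤ t ∧ t ≤ p → s t = v with hQ
      have hQp : Q p := hPp
      have hfind : ∃ i, Q i := ⟨p, hQp⟩
      set i := Nat.find hfind with hidef
      have hQi : Q i := Nat.find_spec hfind
      have hip : i ≤ p := Nat.find_min' hfind hQp
      have hrun : IsMaxRun s v i (p + 1 - i) := by
        refine ⟨by omega, ?_, ?_, ?_⟩
        · intro t ht; exact hQi (i + t) ⟨by omega, by omega⟩
        · by_cases h0 : i = 0
          · left; exact h0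
          · right
            intro hv
            have hmin := Nat.find_min hfind (m := i - 1) (by omega)
            apply hmin
            intro t ht
            rcases Nat.eq_or_lt_of_le ht.1 with h' | h'
            · rw [← h']; convert hv using 2
            · exact hQi t ⟨by omega, ht.2⟩
        · have : i + (p + 1 - i) = p + 1 := by omega
          rw [this]
          by_cases h' : p + 1 < m
          · exact hpmax (p+1) (by omega) h'
          · have : p + 1 = m := by omega
            rw [this]; exact hm
      have hdl : σ ∣ (p + 1 - i) := hr i (p + 1 - i) hrun
      have e1 : rk s v m = rk s v (p+1) := by
        have : m = (p + 1) + (m - (p+1)) := by omega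
        rw [this, rk_flat s v (p+1) (m - (p+1))]
        intro t ht
        exact hpmax (p + 1 + t) (by omega) (by omega)
      have e2 : rk s v (p+1) = rk s v i + (p + 1 - i) := by
        have hrr := rk_run s v i (p + 1 - i) (fun t ht => hQi (i + t) ⟨by omega, by omega⟩)
        rw [show i + (p + 1 - i) = p + 1 from by omega] at hrr
        exact hrr
      have e3 : σ ∣ rk s v i := by
        by_cases h0 : i = 0
        · simp [h0, rk]
        · obtain ⟨io, hio⟩ : ∃ io, i = io + 1 := ⟨i - 1, by omega⟩
          have hne' : s io ≠ v := by
            rcases hrun.2.2.1 with h' | h'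
            · omega
            · rwa [show i - 1 = io from by omega] at h'
          have h2 : rk s v i = rk s v io := by
            rw [hio, rk_succ, if_neg hne']
            omega
          rw [h2]
          exact ih io (by omega) hne'
      rw [e1, e2]
      exact Nat.dvd_add e3 hdl
    · push_neg at hex
      have : rk s v m = 0 := by
        unfold rk
        rw [Finset.card_eq_zero, Finset.filter_eq_empty_iff]
        intro q hq
        exact hex q (Finset.mem_range.mp hq)
      rw [this]
      exact Dvd.intro 0 rfl


@[simp] lemma upRank_eq (s : ℕ → ℤ) (p : ℕ) : upRank s p = rk s 1 p := rfl
@[simp] lemma downRank_eq (s : ℕ → ℤ) (p : ℕ) : downRank s p = rk s (-1) p := rfl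

lemma pathSum_eq {n : ℕ} {s : ℕ → ℤ} (hmz : IsMotzkin n s) (m : ℕ) :
    PathSum s m = (rk s 1 m : ℤ) - (rk s (-1) m : ℤ) := by
  induction m with
  | zero => simp [PathSum, rk]
  | succ m ih =>
    have h1 : PathSum s (m+1) = PathSum s m + s m := Finset.sum_range_succ _ _
    rcases hmz.1 m with h | h | h <;>
      rw [h1, ih, rk_succ, rk_succ, h] <;> norm_num <;> omega

lemma pos_lt_len {n : ℕ} {s : ℕ → ℤ} (hmz : IsMotzkin n s) {p : ℕ} (h : s p ≠ 0) : p < n := by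
  by_contra hc
  exact h (hmz.2.1 p (by omega))

lemma down_lt_up {n : ℕ} {s : ℕ → ℤ} (hmz : IsMotzkin n s) {q : ℕ} (hq : s q = -1) :
    rk s (-1) q < rk s 1 q := by
  have h0 := hmz.2.2.1 (q+1)
  rw [pathSum_eq hmz (q+1), rk_succ, rk_succ, hq] at h0
  norm_num at h0
  omega

lemma total_eq {n : ℕ} {s : ℕ → ℤ} (hmz : IsMotzkin n s) : rk s 1 n = rk s (-1) n := by
  have h0 := hmz.2.2.2
  rw [pathSum_eq hmz n] at h0
  omega

lemma mult_next {σ M N : ℕ} (hσ : 0 < σ) (hd : σ ∣ N) (h : M < N) :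
    σ * (M / σ + 1) ≤ N := by
  obtain ⟨c, rfl⟩ := hd
  have h2 : M / σ < c := Nat.div_lt_of_lt_mul (by omega)
  exact Nat.mul_le_mul_left σ h2

lemma step_next {σ : ℕ} {s : ℕ → ℤ} {v : ℤ} (hr : ∀ i l, IsMaxRun s v i l → σ ∣ l)
    {p : ℕ} (hp : s p = v) (h : rk s v (p+1) % σ ≠ 0) :
    s (p+1) = v ∧ rk s v (p+1) = rk s v p + 1 := by
  have h2 : rk s v (p+1) = rk s v p + 1 := by rw [rk_succ, if_pos hp]
  refine ⟨?_, h2⟩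
  by_contra hc
  exact h (Nat.eq_zero_of_dvd_of_lt (rk_dvd σ s v hr (p+1) hc) |> fun _ => by
    have := rk_dvd σ s v hr (p+1) hc
    omega)

lemma step_prev {σ : ℕ} {s : ℕ → ℤ} {v : ℤ} (hr : ∀ i l, IsMaxRun s v i l → σ ∣ l)
    {p : ℕ} (hp : s p = v) (h : rk s v p % σ ≠ 0) :
    0 < p ∧ s (p-1) = v ∧ rk s v p = rk s v (p-1) + 1 := by
  have hp0 : 0 < p := by
    by_contra hc
    have : p = 0 := by omega
    rw [this] at h
    simp [rk] at h
  obtain ⟨po, hpo⟩ : ∃ po, p = po + 1 := ⟨p - 1, by omega⟩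
  have hprev : s po = v := by
    by_contra hc
    have hd := rk_dvd σ s v hr po hc
    have : rk s v p = rk s v po := by rw [hpo, rk_succ, if_neg hc]; omega
    rw [this] at h
    exact h (Nat.eq_zero_of_dvd_of_lt hd |> fun _ => by omega)
  have : rk s v p = rk s v (p-1) + 1 := by
    rw [hpo, rk_succ, if_pos hprev]
    simp
  exact ⟨hp0, by rw [show p - 1 = po from by omega]; exact hprev, this⟩

lemma mem_pd {σ n : ℕ} {s : ℕ → ℤ} (hmz : IsMotzkin n s) {p q : ℕ}
    (hp : s p = 1) (hq : s q = -1) :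
    ((p+1, q+1) ∈ pathDiagram σ n s ↔
      (rk s 1 p / σ = rk s (-1) q / σ ∧ rk s 1 p % σ + rk s (-1) q % σ = σ - 1)) := by
  have hpn : p < n := pos_lt_len hmz (by rw [hp]; norm_num)
  have hqn : q < n := pos_lt_len hmz (by rw [hq]; norm_num)
  rw [pathDiagram, Finset.mem_filter]
  simp only [Finset.mem_product, Finset.mem_Icc,
    Nat.add_sub_cancel, upRank_eq, downRank_eq]
  constructor
  · rintro ⟨-, -, -, h1, h2⟩
    exact ⟨h1, h2⟩
  · rintro ⟨h1, h2⟩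
    exact ⟨⟨⟨by omega, by omega⟩, by omega, by omega⟩, hp, hq, h1, h2⟩

lemma pd_elim {σ n : ℕ} {s : ℕ → ℤ} {a : ℕ × ℕ} (ha : a ∈ pathDiagram σ n s) :
    ∃ p q, a = (p+1, q+1) ∧ p < n ∧ q < n ∧ s p = 1 ∧ s q = -1 ∧
      rk s 1 p / σ = rk s (-1) q / σ ∧ rk s 1 p % σ + rk s (-1) q % σ = σ - 1 := by
  simp only [pathDiagram, Finset.mem_filter, Finset.mem_product, Finset.mem_Icc] at ha
  obtain ⟨⟨⟨ha1, ha2⟩, ha3, ha4⟩, h1, h2, h3, h4⟩ := ha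
  refine ⟨a.1 - 1, a.2 - 1, ?_, by omega, by omega, h1, h2, h3, h4⟩
  ext <;> simp <;> omega

lemma pd_lt {σ n : ℕ} {s : ℕ → ℤ} (hσ : 0 < σ) (hmz : IsMotzkin n s)
    (hup : ∀ i l, IsMaxRun s 1 i l → σ ∣ l) {p q : ℕ}
    (hp : s p = 1) (hq : s q = -1) (hdiv : rk s 1 p / σ = rk s (-1) q / σ) : p < q := by
  have h1 : σ ∣ rk s 1 q := rk_dvd σ s 1 hup q (by rw [hq]; norm_num)
  have h2 : rk s (-1) q < rk s 1 q := down_lt_up hmz hq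
  have h3 : σ * (rk s (-1) q / σ + 1) ≤ rk s 1 q := mult_next hσ h1 h2
  have e1 : σ * (rk s 1 p / σ) + rk s 1 p % σ = rk s 1 p := Nat.div_add_mod _ _
  have e2 : rk s 1 p % σ < σ := Nat.mod_lt _ hσ
  have h5 : σ * (rk s (-1) q / σ + 1) = σ * (rk s (-1) q / σ) + σ := Nat.mul_succ σ _
  rw [hdiv] at e1
  apply pos_lt_of_rk_lt s 1
  omega

lemma div_mod_decomp {σ c e : ℕ} (hσ : 0 < σ) (he : e < σ) :
    (σ * c + e) / σ = c ∧ (σ * c + e) % σ = e := by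
  constructor
  · rw [Nat.mul_add_div hσ, Nat.div_eq_of_lt he, Nat.add_zero]
  · rw [Nat.mul_add_mod, Nat.mod_eq_of_lt he]

lemma originArc {σ n : ℕ} {s : ℕ → ℤ} (hσ : 0 < σ) (hmz : IsMotzkin n s)
    (hruns : RunsMultiple σ s) {p : ℕ} (hp : s p = 1) :
    ∃ q, s q = -1 ∧ (p+1, q+1) ∈ pathDiagram σ n s := by
  have hpn : p < n := pos_lt_len hmz (by rw [hp]; norm_num)
  have hdvd : σ ∣ rk s 1 n := rk_dvd σ s 1 hruns.1 n (by rw [hmz.2.1 n le_rfl]; norm_num)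
  have hlt : rk s 1 p < rk s 1 n := rk_lt_of s 1 hp hpn
  have hnext : σ * (rk s 1 p / σ + 1) ≤ rk s 1 n := mult_next hσ hdvd hlt
  set d := rk s 1 p / σ with hd
  set u := rk s 1 p % σ with hu
  have hult : u < σ := Nat.mod_lt _ hσ
  have htgt : σ * d + (σ - 1 - u) < rk s (-1) n := by
    rw [← total_eq hmz]
    have : σ * (d + 1) = σ * d + σ := Nat.mul_succ σ d
    omega
  obtain ⟨q, hqn, hq, hrq⟩ := exists_pos s (-1) htgt
  refine ⟨q, hq, (mem_pd hmz hp hq).mpr ?_⟩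
  have hdm := div_mod_decomp (c := d) (e := σ - 1 - u) hσ (by omega)
  rw [hrq]
  exact ⟨by rw [hdm.1], by rw [hdm.2]; omega⟩

lemma terminusArc {σ n : ℕ} {s : ℕ → ℤ} (hσ : 0 < σ) (hmz : IsMotzkin n s)
    (hruns : RunsMultiple σ s) {q : ℕ} (hq : s q = -1) :
    ∃ p, s p = 1 ∧ (p+1, q+1) ∈ pathDiagram σ n s := by
  have hqn : q < n := pos_lt_len hmz (by rw [hq]; norm_num)
  have hdvd : σ ∣ rk s 1 n := rk_dvd σ s 1 hruns.1 n (by rw [hmz.2.1 n le_rfl]; norm_num)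
  have hlt : rk s (-1) q < rk s (-1) n := rk_lt_of s (-1) hq hqn
  have hlt' : rk s (-1) q < rk s 1 n := by rw [total_eq hmz]; exact hlt
  have hnext : σ * (rk s (-1) q / σ + 1) ≤ rk s 1 n := mult_next hσ hdvd hlt'
  set d := rk s (-1) q / σ with hd
  set w := rk s (-1) q % σ with hw
  have hwlt : w < σ := Nat.mod_lt _ hσ
  have htgt : σ * d + (σ - 1 - w) < rk s 1 n := by
    have : σ * (d + 1) = σ * d + σ := Nat.mul_succ σ d
    omega
  obtain ⟨p, hpn, hp, hrp⟩ := exists_pos s 1 htgt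
  refine ⟨p, hp, (mem_pd hmz hp hq).mpr ?_⟩
  have hdm := div_mod_decomp (c := d) (e := σ - 1 - w) hσ (by omega)
  rw [hrp]
  exact ⟨by rw [hdm.1], by rw [hdm.2]; omega⟩

lemma part1 {σ n : ℕ} {s : ℕ → ℤ} (hσ : 2 ≤ σ) (hmz : IsMotzkin n s)
    (hruns : RunsMultiple σ s) : IsDiagram n (pathDiagram σ n s) := by
  constructor
  · intro a ha
    obtain ⟨p, q, rfl, hpn, hqn, hp, hq, h1, h2⟩ := pd_elim ha
    have := pd_lt (by omega) hmz hruns.1 hp hq h1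
    exact ⟨by omega, by simp; omega, by simp; omega⟩
  · intro a ha b hb hab
    obtain ⟨p, q, rfl, hpn, hqn, hp, hq, h1, h2⟩ := pd_elim ha
    obtain ⟨p', q', rfl, hpn', hqn', hp', hq', h1', h2'⟩ := pd_elim hb
    have hσ0 : 0 < σ := by omega
    have eu : σ * (rk s 1 p / σ) + rk s 1 p % σ = rk s 1 p := Nat.div_add_mod _ _
    have eu' : σ * (rk s 1 p' / σ) + rk s 1 p' % σ = rk s 1 p' := Nat.div_add_mod _ _
    have ew : σ * (rk s (-1) q / σ) + rk s (-1) q % σ = rk s (-1) q := Nat.div_add_mod _ _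
    have ew' : σ * (rk s (-1) q' / σ) + rk s (-1) q' % σ = rk s (-1) q' := Nat.div_add_mod _ _
    have hum : rk s 1 p % σ < σ := Nat.mod_lt _ hσ0
    have hum' : rk s 1 p' % σ < σ := Nat.mod_lt _ hσ0
    have hwm : rk s (-1) q % σ < σ := Nat.mod_lt _ hσ0
    have hwm' : rk s (-1) q' % σ < σ := Nat.mod_lt _ hσ0
    refine ⟨?_, ?_, ?_, ?_⟩
    · intro h
      have hpp : p = p' := by simpa using h
      subst hpp
      have hq2 : q = q' := by
        apply pos_unique s (-1) hq hq'
        rw [h1] at eu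
        rw [h1'] at eu'
        omega
      exact hab (by rw [hq2])
    · intro h
      have : p = q' := by simpa using h
      rw [this, hq'] at hp
      norm_num at hp
    · intro h
      have : q = p' := by simpa using h
      rw [this, hp'] at hq
      norm_num at hq
    · intro h
      have hqq : q = q' := by simpa using h
      subst hqq
      have hp2 : p = p' := by
        apply pos_unique s 1 hp hp'
        rw [h1] at eu
        rw [h1'] at eu'
        omega
      exact hab (by rw [hp2])

lemma part4 {σ n : ℕ} {s : ℕ → ℤ} (hσ : 2 ≤ σ) (hmz : IsMotzkin n s)
    (hruns : RunsMultiple σ s) : Canonical σ (pathDiagram σ n s) := by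
  intro i j l hst
  by_contra hc
  push_neg at hc
  obtain ⟨hl, hmem, htop, hbot⟩ := hst
  have hσ0 : 0 < σ := by omega
  have h0 : (i, j) ∈ pathDiagram σ n s := by
    have := hmem 0 hl
    simpa using this
  obtain ⟨p, q, hpq, hpn, hqn, hp, hq, h1, h2⟩ := pd_elim h0
  have hi : i = p + 1 := congrArg Prod.fst hpq
  have hj : j = q + 1 := congrArg Prod.snd hpq
  set d := rk s 1 p / σ with hd
  set u := rk s 1 p % σ with hu
  set w := rk s (-1) q % σ with hw
  have hult : u < σ := Nat.mod_lt _ hσ0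
  have hwlt : w < σ := Nat.mod_lt _ hσ0
  have eu : σ * d + u = rk s 1 p := Nat.div_add_mod _ _
  have ew : σ * d + w = rk s (-1) q := by
    have := Nat.div_add_mod (rk s (-1) q) σ
    rw [← h1] at this
    exact this
  -- Step A : u = 0
  have hu0 : u = 0 := by
    by_contra hune
    obtain ⟨hp0, hpprev, hprk⟩ := step_prev hruns.1 hp hune
    have hqrk : rk s (-1) (q+1) = σ * d + (w + 1) := by
      rw [rk_succ, if_pos hq]
      omega
    have hqmod : rk s (-1) (q+1) % σ = w + 1 := by
      rw [hqrk]
      exact (div_mod_decomp hσ0 (by omega)).2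
    obtain ⟨hqnext, -⟩ := step_next hruns.2 hq (by rw [hqmod]; omega)
    have hprk' : rk s 1 (p-1) = σ * d + (u - 1) := by omega
    have harc : ((p-1)+1, (q+1)+1) ∈ pathDiagram σ n s := by
      rw [mem_pd hmz hpprev hqnext]
      have d1 := div_mod_decomp (σ := σ) (c := d) (e := u - 1) hσ0 (by omega)
      have d2 := div_mod_decomp (σ := σ) (c := d) (e := w + 1) hσ0 (by omega)
      rw [hprk', hqrk, d1.1, d2.1, d1.2, d2.2]
      omega
    apply htop
    rw [hi, hj]
    have e1 : p + 1 - 1 = (p - 1) + 1 := by omega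
    have e2 : q + 1 + 1 = (q + 1) + 1 := rfl
    rw [e1]
    exact harc
  have hwσ : w = σ - 1 := by omega
  -- Step B : the full stack is present
  have claim : ∀ t, t < σ → s (p+t) = 1 ∧ rk s 1 (p+t) = σ*d + t ∧ t ≤ q ∧
      s (q-t) = -1 ∧ rk s (-1) (q-t) = σ*d + (σ-1-t) := by
    intro t
    induction t with
    | zero =>
      intro _
      simp only [Nat.add_zero, Nat.sub_zero]
      exact ⟨hp, by omega, by omega, hq, by omega⟩
    | succ t ih =>
      intro ht
      obtain ⟨ih1, ih2, ih3, ih4, ih5⟩ := ih (by omega)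
      have eup : rk s 1 (p+t+1) = σ*d + (t+1) := by
        rw [rk_succ, if_pos ih1]
        omega
      have hupmod : rk s 1 (p+t+1) % σ = t + 1 := by
        rw [eup]
        exact (div_mod_decomp hσ0 (by omega)).2
      obtain ⟨hup1, -⟩ := step_next hruns.1 ih1 (by rw [hupmod]; omega)
      have hdnmod : rk s (-1) (q-t) % σ = σ - 1 - t := by
        rw [ih5]
        exact (div_mod_decomp hσ0 (by omega)).2
      obtain ⟨hqt0, hdn1, hdn2⟩ := step_prev hruns.2 ih4 (by rw [hdnmod]; omega)
      have e3 : q - t - 1 = q - (t+1) := by omega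
      refine ⟨by rw [show p+(t+1) = p+t+1 from by omega]; exact hup1,
        by rw [show p+(t+1) = p+t+1 from by omega]; exact eup,
        by omega,
        by rw [← e3]; exact hdn1,
        by rw [← e3]; omega⟩
  obtain ⟨cl1, cl2, cl3, cl4, cl5⟩ := claim l hc
  apply hbot
  have harc2 : ((p+l)+1, (q-l)+1) ∈ pathDiagram σ n s := by
    rw [mem_pd hmz cl1 cl4]
    have d1 := div_mod_decomp (σ := σ) (c := d) (e := l) hσ0 hc
    have d2 := div_mod_decomp (σ := σ) (c := d) (e := σ-1-l) hσ0 (by omega)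
    rw [cl2, cl5, d1.1, d2.1, d1.2, d2.2]
    omega
  rw [hi, hj]
  rw [show p + 1 + l = (p+l)+1 from by omega, show q + 1 - l = (q-l)+1 from by omega]
  exact harc2

lemma kept_mod {σ n : ℕ} {s : ℕ → ℤ} (hσ : 2 ≤ σ) (hmz : IsMotzkin n s)
    (hruns : RunsMultiple σ s) {x : ℕ × ℕ} (hx : x ∈ keptArcs (pathDiagram σ n s)) :
    ∃ p q, x = (p+1, q+1) ∧ s p = 1 ∧ s q = -1 ∧
      rk s 1 p = σ * (rk s 1 p / σ) + (σ - 1) ∧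
      rk s (-1) q = σ * (rk s 1 p / σ) := by
  have hσ0 : 0 < σ := by omega
  obtain ⟨hxD, hxk⟩ := Finset.mem_filter.mp hx
  obtain ⟨p, q, hpq, hpn, hqn, hp, hq, h1, h2⟩ := pd_elim hxD
  set d := rk s 1 p / σ with hd
  set u := rk s 1 p % σ with hu
  set w := rk s (-1) q % σ with hw
  have hult : u < σ := Nat.mod_lt _ hσ0
  have hwlt : w < σ := Nat.mod_lt _ hσ0
  have eu : σ * d + u = rk s 1 p := Nat.div_add_mod _ _
  have ew : σ * d + w = rk s (-1) q := by
    have := Nat.div_add_mod (rk s (-1) q) σ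
    rw [← h1] at this
    exact this
  have huσ : u = σ - 1 := by
    by_contra hune
    have hwne : w ≠ 0 := by omega
    have eup : rk s 1 (p+1) = σ*d + (u+1) := by
      rw [rk_succ, if_pos hp]
      omega
    obtain ⟨hup1, -⟩ := step_next hruns.1 hp
      (by rw [eup, (div_mod_decomp hσ0 (show u+1 < σ by omega)).2]; omega)
    obtain ⟨hq0, hdn1, hdn2⟩ := step_prev hruns.2 hq
      (by rw [← ew, (div_mod_decomp hσ0 hwlt).2]; omega)
    have harc : ((p+1)+1, (q-1)+1) ∈ pathDiagram σ n s := by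
      rw [mem_pd hmz hup1 hdn1]
      have d1 := div_mod_decomp (σ := σ) (c := d) (e := u+1) hσ0 (by omega)
      have d2 := div_mod_decomp (σ := σ) (c := d) (e := w-1) hσ0 (by omega)
      have edn : rk s (-1) (q-1) = σ*d + (w-1) := by omega
      rw [eup, edn, d1.1, d2.1, d1.2, d2.2]
      omega
    apply hxk
    rw [hpq]
    have e1 : (p+1, q+1).1 + 1 = (p+1)+1 := rfl
    have e2 : (p+1, q+1).2 - 1 = (q-1)+1 := by simp; omega
    rw [e1, e2]
    exact harc
  refine ⟨p, q, hpq, hp, hq, ?_, ?_⟩ <;> rw [← hd] <;> omega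

lemma part5 {σ n : ℕ} {s : ℕ → ℤ} (hσ : 2 ≤ σ) (hmz : IsMotzkin n s)
    (hruns : RunsMultiple σ s) :
    ∀ a ∈ coreDiagram n (pathDiagram σ n s), ∀ b ∈ coreDiagram n (pathDiagram σ n s),
      ¬ ArcNested a b := by
  have hσ0 : 0 < σ := by omega
  intro a ha b hb hn
  simp only [coreDiagram, Finset.mem_image] at ha hb
  obtain ⟨x, hx, rfl⟩ := ha
  obtain ⟨y, hy, rfl⟩ := hb
  have hmono : ∀ r r' : ℕ, r ≤ r' →
      coreRank n (pathDiagram σ n s) r ≤ coreRank n (pathDiagram σ n s) r' := by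
    intro r r' hrr
    apply Finset.card_le_card
    intro z hz
    simp only [Finset.mem_filter] at *
    exact ⟨hz.1, le_trans hz.2 hrr⟩
  obtain ⟨hn1, hn2⟩ := hn
  simp only at hn1 hn2
  have hyx : y.1 < x.1 := by
    by_contra hcon
    exact absurd (hmono x.1 y.1 (by omega)) (by omega)
  have hxy : x.2 < y.2 := by
    by_contra hcon
    exact absurd (hmono y.2 x.2 (by omega)) (by omega)
  obtain ⟨px, qx, hxeq, hpx, hqx, hux, hwx⟩ := kept_mod hσ hmz hruns hx
  obtain ⟨py, qy, hyeq, hpy, hqy, huy, hwy⟩ := kept_mod hσ hmz hruns hy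
  rw [hxeq, hyeq] at hyx hxy
  simp only at hyx hxy
  have hpyx : py < px := by omega
  have hqxy : qx < qy := by omega
  have hr1 : rk s 1 py < rk s 1 px := rk_lt_of s 1 hpy hpyx
  have hr2 : rk s (-1) qx < rk s (-1) qy := rk_lt_of s (-1) hqx hqxy
  set bx := rk s 1 px / σ
  set by' := rk s 1 py / σ
  have hb1 : by' < bx := by
    have : σ * by' < σ * bx := by omega
    exact Nat.lt_of_mul_lt_mul_left this
  have hb2 : bx < by' := by
    have : σ * bx < σ * by' := by omega
    exact Nat.lt_of_mul_lt_mul_left this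
  omega

lemma part6a {σ k n : ℕ} {s : ℕ → ℤ} (hσ : 2 ≤ σ) (hk : 2 ≤ k) (hmz : IsMotzkin n s)
    (hruns : RunsMultiple σ s) (hcr : HasKCrossing k (pathDiagram σ n s)) :
    ∃ m, ((σ * k : ℕ) : ℤ) ≤ PathSum s m := by
  have hσ0 : 0 < σ := by omega
  obtain ⟨f, hmem, hm1, hm2, hm3⟩ := hcr
  choose p q hfeq hpn hqn hp hq hdiv hsum using fun t => pd_elim (σ := σ) (n := n) (hmem t)
  set b : Fin k → ℕ := fun t => rk s 1 (p t) / σ with hb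
  have hdecu : ∀ t, σ * b t + rk s 1 (p t) % σ = rk s 1 (p t) := fun t => Nat.div_add_mod _ _
  have hdecw : ∀ t, σ * b t + rk s (-1) (q t) % σ = rk s (-1) (q t) := by
    intro t
    have := Nat.div_add_mod (rk s (-1) (q t)) σ
    rw [← hdiv t] at this
    exact this
  have hmodu : ∀ t, rk s 1 (p t) % σ < σ := fun t => Nat.mod_lt _ hσ0
  have hbmono : ∀ t u : Fin k, t < u → b t < b u := by
    intro t u htu
    have hf1 := hm1 t u htu
    have hf2 := hm2 t u htu
    rw [hfeq t, hfeq u] at hf1 hf2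
    simp only at hf1 hf2
    have hr1 : rk s 1 (p t) < rk s 1 (p u) := rk_lt_of s 1 (hp t) (by omega)
    have hr2 : rk s (-1) (q t) < rk s (-1) (q u) := rk_lt_of s (-1) (hq t) (by omega)
    rcases lt_trichotomy (b t) (b u) with h | h | h
    · exact h
    · exfalso
      have e1 := hdecu t
      have e2 := hdecu u
      have e3 := hdecw t
      have e4 := hdecw u
      have e5 := hsum t
      have e6 := hsum u
      rw [h] at e1 e3
      omega
    · exfalso
      have hmul : σ * (b u + 1) ≤ σ * b t := Nat.mul_le_mul_left σ (by omega)
      have hms : σ * (b u + 1) = σ * b u + σ := Nat.mul_succ σ _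
      have e1 := hdecu t
      have e2 := hdecu u
      have := hmodu u
      omega
  have hpos : 0 < k := by omega
  set t0 : Fin k := ⟨0, hpos⟩ with ht0
  set tK : Fin k := ⟨k-1, by omega⟩ with htK
  have hchain : ∀ j (hj : j < k), b t0 + j ≤ b ⟨j, hj⟩ := by
    intro j
    induction j with
    | zero =>
      intro hj
      rw [show (⟨0, hj⟩ : Fin k) = t0 from rfl]
      omega
    | succ j ih =>
      intro hj
      have h1 := ih (by omega)
      have h2 := hbmono ⟨j, by omega⟩ ⟨j+1, hj⟩ (Fin.mk_lt_mk.mpr (by omega))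
      omega
  have hBK : b t0 + (k-1) ≤ b tK := hchain (k-1) (by omega)
  -- Q : first down of block b t0
  have hq0n : rk s (-1) (q t0) < rk s (-1) n := rk_lt_of s (-1) (hq t0) (hqn t0)
  have hQex : σ * b t0 < rk s (-1) n := by
    have := hdecw t0
    omega
  obtain ⟨Q, hQn, hQ, hrQ⟩ := exists_pos s (-1) hQex
  -- p tK < Q
  have hpKQ : p tK < Q := by
    by_contra hcon
    have hne : Q ≠ p tK := by
      intro h
      rw [h, hp tK] at hQ
      norm_num at hQ
    have hQlt : Q < p tK := by omega
    have hr3 : rk s (-1) Q < rk s (-1) (p tK) := rk_lt_of s (-1) hQ hQlt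
    have hdvd : σ ∣ rk s (-1) (p tK) :=
      rk_dvd σ s (-1) hruns.2 (p tK) (by rw [hp tK]; norm_num)
    have hnext : σ * (σ * b t0 / σ + 1) ≤ rk s (-1) (p tK) := by
      apply mult_next hσ0 hdvd
      omega
    rw [Nat.mul_div_cancel_left _ hσ0] at hnext
    have hms : σ * (b t0 + 1) = σ * b t0 + σ := Nat.mul_succ σ _
    -- p tK < q t0 from hm3
    have hf3 := hm3 tK t0
    rw [hfeq tK, hfeq t0] at hf3
    simp only at hf3
    have hple : rk s (-1) (p tK) ≤ rk s (-1) (q t0) := rk_mono s (-1) (by omega)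
    have e3 := hdecw t0
    have := hmodu t0
    have e5 := hsum t0
    omega
  -- upRank at Q
  have hdvdQ : σ ∣ rk s 1 Q := rk_dvd σ s 1 hruns.1 Q (by rw [hQ]; norm_num)
  have hrpK : rk s 1 (p tK) < rk s 1 Q := rk_lt_of s 1 (hp tK) hpKQ
  have hbig : σ * (b t0 + (k-1)) ≤ rk s 1 (p tK) := by
    have h1 : σ * (b t0 + (k-1)) ≤ σ * b tK := Nat.mul_le_mul_left σ hBK
    have := hdecu tK
    omega
  have hnextQ : σ * (σ * (b t0 + (k-1)) / σ + 1) ≤ rk s 1 Q := by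
    apply mult_next hσ0 hdvdQ
    omega
  rw [Nat.mul_div_cancel_left _ hσ0] at hnextQ
  refine ⟨Q, ?_⟩
  rw [pathSum_eq hmz Q, hrQ]
  have hms1 : σ * (b t0 + (k-1) + 1) = σ * (b t0) + σ * (k-1) + σ := by ring
  have hms2 : σ * k = σ * (k-1) + σ := by
    conv_lhs => rw [show k = (k-1)+1 from by omega]
    exact Nat.mul_succ σ (k-1)
  push_cast
  omega

lemma part6b {σ k n : ℕ} {s : ℕ → ℤ} (hσ : 2 ≤ σ) (hk : 2 ≤ k) (hmz : IsMotzkin n s)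
    (hruns : RunsMultiple σ s) {m0 : ℕ} (hm0 : ((σ * k : ℕ) : ℤ) ≤ PathSum s m0) :
    HasKCrossing k (pathDiagram σ n s) := by
  classical
  have hσ0 : 0 < σ := by omega
  have hP : ∃ m, ((σ * k : ℕ) : ℤ) ≤ PathSum s m := ⟨m0, hm0⟩
  set m := Nat.find hP with hmdef
  have hm : ((σ * k : ℕ) : ℤ) ≤ PathSum s m := Nat.find_spec hP
  have hmin : ∀ m' < m, ¬ ((σ * k : ℕ) : ℤ) ≤ PathSum s m' := fun m' h => Nat.find_min hP h
  have hσk : 4 ≤ σ * k := by calc 4 = 2 * 2 := rfl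
                                 _ ≤ σ * k := Nat.mul_le_mul hσ hk
  have hm0' : m ≠ 0 := by
    intro h
    rw [h] at hm
    simp [PathSum] at hm
    omega
  clear_value m
  obtain ⟨m', rfl⟩ : ∃ m', m = m' + 1 := ⟨m - 1, by omega⟩
  have hps : PathSum s (m'+1) = PathSum s m' + s m' := Finset.sum_range_succ _ _
  have hsm' : s m' = 1 := by
    have hlt := hmin m' (by omega)
    rcases hmz.1 m' with h | h | h
    · exact h
    · exfalso; rw [hps, h] at hm; omega
    · exfalso; rw [hps, h] at hm; omega
  have hdn : rk s (-1) (m'+1) = rk s (-1) m' := by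
    rw [rk_succ, if_neg (by rw [hsm']; norm_num)]
    omega
  have hdvd : σ ∣ rk s (-1) m' := rk_dvd σ s (-1) hruns.2 m' (by rw [hsm']; norm_num)
  obtain ⟨d, hd⟩ := hdvd
  -- m + 1 ≤ n
  have hmn : m' + 1 ≤ n := by
    by_contra hcon
    have h1 : rk s 1 (m'+1) = rk s 1 n := by
      rw [show m' + 1 = n + (m'+1-n) from by omega]
      exact rk_flat s 1 n _ (fun t ht => by rw [hmz.2.1 (n+t) (by omega)]; norm_num)
    have h2 : rk s (-1) (m'+1) = rk s (-1) n := by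
      rw [show m' + 1 = n + (m'+1-n) from by omega]
      exact rk_flat s (-1) n _ (fun t ht => by rw [hmz.2.1 (n+t) (by omega)]; norm_num)
    rw [pathSum_eq hmz, h1, h2, ← pathSum_eq hmz, hmz.2.2.2] at hm
    omega
  have hup : σ * k + σ * d ≤ rk s 1 (m'+1) := by
    have hps1 := pathSum_eq hmz (m'+1)
    rw [hps1, hdn, hd] at hm
    push_cast at hm ⊢
    omega
  have hupn : σ * k + σ * d ≤ rk s 1 n := le_trans hup (rk_mono s 1 hmn)
  have htot : rk s 1 n = rk s (-1) n := total_eq hmz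
  -- choose the k arcs
  have hex : ∀ t : Fin k, ∃ pq : ℕ × ℕ, s pq.1 = 1 ∧ s pq.2 = -1 ∧
      rk s 1 pq.1 = σ * (d + t.val) + (σ - 1) ∧ rk s (-1) pq.2 = σ * (d + t.val) := by
    intro t
    have htk : t.val + 1 ≤ k := t.2
    have e1 : σ * (d + t.val) + σ ≤ σ * (d + k) := by
      have : σ * (d + t.val + 1) ≤ σ * (d + k) := Nat.mul_le_mul_left σ (by omega)
      rw [Nat.mul_succ] at this
      omega
    have e2 : σ * (d + k) = σ * d + σ * k := Nat.mul_add σ d k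
    have hru : σ * (d + t.val) + (σ - 1) < rk s 1 n := by omega
    have hrd : σ * (d + t.val) < rk s (-1) n := by omega
    obtain ⟨pt, hptn, hpt, hrpt⟩ := exists_pos s 1 hru
    obtain ⟨qt, hqtn, hqt, hrqt⟩ := exists_pos s (-1) hrd
    exact ⟨(pt, qt), hpt, hqt, hrpt, hrqt⟩
  choose g hg1 hg2 hg3 hg4 using hex
  refine ⟨fun t => ((g t).1 + 1, (g t).2 + 1), ?_, ?_, ?_, ?_⟩
  · intro t
    rw [mem_pd hmz (hg1 t) (hg2 t)]
    have d1 := div_mod_decomp (σ := σ) (c := d + t.val) (e := σ - 1) hσ0 (by omega)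
    have d2 : σ * (d + t.val) / σ = d + t.val := Nat.mul_div_cancel_left _ hσ0
    have d3 : σ * (d + t.val) % σ = 0 := Nat.mul_mod_right σ _
    rw [hg3 t, hg4 t, d1.1, d2, d1.2, d3]
    omega
  · intro t u htu
    simp only
    have : rk s 1 (g t).1 < rk s 1 (g u).1 := by
      rw [hg3 t, hg3 u]
      have : σ * (d + t.val) < σ * (d + u.val) :=
        Nat.mul_lt_mul_of_pos_left (by have := Fin.lt_def.mp htu; omega) hσ0
      omega
    have := pos_lt_of_rk_lt s 1 this
    omega
  · intro t u htu
    simp only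
    have : rk s (-1) (g t).2 < rk s (-1) (g u).2 := by
      rw [hg4 t, hg4 u]
      exact Nat.mul_lt_mul_of_pos_left (by have := Fin.lt_def.mp htu; omega) hσ0
    have := pos_lt_of_rk_lt s (-1) this
    omega
  · intro t u
    simp only
    have h1 : (g t).1 < m' + 1 := by
      apply pos_lt_of_rk_lt s 1
      rw [hg3 t]
      have e1 : σ * (d + t.val) + σ ≤ σ * (d + k) := by
        have : σ * (d + t.val + 1) ≤ σ * (d + k) := Nat.mul_le_mul_left σ (by omega)
        rw [Nat.mul_succ] at this
        omega
      have e2 : σ * (d + k) = σ * d + σ * k := Nat.mul_add σ d k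
      omega
    have h2 : m' + 1 ≤ (g u).2 := by
      by_contra hcon
      have : rk s (-1) (g u).2 < rk s (-1) (m'+1) := rk_lt_of s (-1) (hg2 u) (by omega)
      rw [hg4 u, hdn, hd] at this
      have : σ * d ≤ σ * (d + u.val) := Nat.mul_le_mul_left σ (by omega)
      omega
    omega

end S12

/-- Let `σ, k ≥ 2` and let `s` be a Motzkin path of length `n` whose
maximal up- and down-runs have length a positive multiple of `σ`.  Then the pairing of
`σ`-blocks is well defined — every up-step is the origin and every down-step the terminus of
exactly one arc of `δ_ζ`, which is a diagram over `[n]` — the diagram `δ_ζ` is `σ`-canonical,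
its core has no two nested arcs, and `δ_ζ` is `k`-noncrossing if and only if the height of
the path is less than `σk` (equivalently, at most `σ(k-1)`). -/
theorem statement12 (σ k n : ℕ) (hσ : 2 ≤ σ) (hk : 2 ≤ k) (s : ℕ → ℤ)
    (hmz : IsMotzkin n s) (hruns : RunsMultiple σ s) :
    IsDiagram n (pathDiagram σ n s) ∧
    (∀ p < n, s p = 1 → ∃ a ∈ pathDiagram σ n s, a.1 = p + 1) ∧
    (∀ p < n, s p = -1 → ∃ a ∈ pathDiagram σ n s, a.2 = p + 1) ∧
    Canonical σ (pathDiagram σ n s) ∧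
    (∀ a ∈ coreDiagram n (pathDiagram σ n s), ∀ b ∈ coreDiagram n (pathDiagram σ n s),
      ¬ ArcNested a b) ∧
    (Noncrossing k (pathDiagram σ n s) ↔ ∀ m, PathSum s m < (σ * k : ℕ)) := by
  have hσ0 : 0 < σ := by omega
  refine ⟨S12.part1 hσ hmz hruns, ?_, ?_, S12.part4 hσ hmz hruns, S12.part5 hσ hmz hruns, ?_⟩
  · intro p hpn hp
    obtain ⟨q, hq, hmem⟩ := S12.originArc hσ0 hmz hruns hp
    exact ⟨(p+1, q+1), hmem, rfl⟩
  · intro q hqn hq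
    obtain ⟨p, hp, hmem⟩ := S12.terminusArc hσ0 hmz hruns hq
    exact ⟨(p+1, q+1), hmem, rfl⟩
  · constructor
    · intro hnc m
      by_contra hcon
      push_neg at hcon
      exact hnc (S12.part6b hσ hk hmz hruns hcon)
    · intro hbound hcr
      obtain ⟨m, hge⟩ := S12.part6a hσ hk hmz hruns hcr
      have := hbound m
      omega
end

section
/- For k = 4 the projection of the insertion tree onto skeleta is in general not injective: there exist a 4-noncrossing skeleton S₀, an integer r₀, and two distinct vertices (S₁,r₁) ≠ (S₂,r₂) of the insertion graph G_{(S₀,r₀)} (built with 4-noncrossing skeleta in place of 3-noncrossing skeleta) such that S₁ = S₂; i.e., the graph morphism π: 𝕋 → 𝕋₁ with π((S,r)) = S, where 𝕋₁ = {S ∣ ∃ r, (S,r) ∈ 𝕋}, is not bijective. -/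
open Classical

/-- A `k`-noncrossing skeleton over the segment `{i,…,j}`: a `k`-noncrossing structure
(partial matching, arcs of length `≥ 4`, stacks of length `≥ σ₀`) over `{i,…,j}` in which
`i` and `j` are paired and every arc is crossed by some other arc. -/
def IsSkeleton (k σ₀ i j : ℕ) (S : Finset (ℕ × ℕ)) : Prop :=
  (∀ a ∈ S, i ≤ a.1 ∧ a.1 < a.2 ∧ a.2 ≤ j) ∧
  (∀ a ∈ S, ∀ b ∈ S, a ≠ b → a.1 ≠ b.1 ∧ a.1 ≠ b.2 ∧ a.2 ≠ b.1 ∧ a.2 ≠ b.2) ∧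
  Noncrossing k S ∧ MinArc4 S ∧ Canonical σ₀ S ∧
  Paired S i ∧ Paired S j ∧
  (∀ a ∈ S, ∃ b ∈ S, ArcCross a b)

/-- The stack `(a,b,l) = ((a,b),(a+1,b-1),…,(a+l-1,b-l+1))` as a set of arcs. -/
noncomputable def stackArcs (a b l : ℕ) : Finset (ℕ × ℕ) :=
  (Finset.range l).image fun t => (a + t, b - t)

/-- The `(a,b,l)`-insertion step `(S,r) ⇒_{(a,b,l)} (S′,r′)` of `k`-noncrossing skeleta over
`{i,…,j}`: positions `a,…,a+l-1` and `b-l+1,…,b` are unpaired in `S` (so `a` and `b` lie in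
intervals of `S`), `a ≥ r`, `a-1` and `b+1` are not paired to each other, `S′` is obtained by
adding the stack `(a,b,l)`, `S′` is a `k`-noncrossing skeleton, `(a+l-1,b-l+1)` is a
`≺`-minimal arc of `S′`, and `r′` is the position of the first paired base preceding the
interval of `S` containing `a`. -/
def InsertStep (k σ₀ i j : ℕ) (p q : Finset (ℕ × ℕ) × ℕ) : Prop :=
  ∃ a b l : ℕ, 0 < l ∧ p.2 ≤ a ∧
    (∀ t < l, ¬ Paired p.1 (a + t) ∧ ¬ Paired p.1 (b - t)) ∧
    (a - 1, b + 1) ∉ p.1 ∧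
    q.1 = p.1 ∪ stackArcs a b l ∧
    IsSkeleton k σ₀ i j q.1 ∧
    (∀ c ∈ q.1, ¬ ArcNested c (a + l - 1, b - l + 1)) ∧
    Paired p.1 q.2 ∧ q.2 < a ∧ (∀ v, Paired p.1 v → v < a → v ≤ q.2)


lemma noK {k : ℕ} {D : Finset (ℕ × ℕ)} (h : D.card < k) : Noncrossing k D := by
  rintro ⟨f, hm, h1, -, -⟩
  have hinj : Function.Injective (fun t => (⟨f t, hm t⟩ : D)) := by
    intro t u hfu
    by_contra hne
    have hfe : f t = f u := by simpa using hfu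
    rcases lt_or_gt_of_ne hne with hlt | hlt
    · exact absurd (congrArg Prod.fst hfe) (ne_of_lt (h1 t u hlt))
    · exact absurd (congrArg Prod.fst hfe).symm (ne_of_lt (h1 u t hlt))
  have hc := Fintype.card_le_of_injective _ hinj
  simp [Fintype.card_coe] at hc
  omega

lemma stack1 (a b : ℕ) : stackArcs a b 1 = {(a, b)} := by
  simp [stackArcs]

def S0ex : Finset (ℕ × ℕ) := {(1,6),(2,10)}
def SAex : Finset (ℕ × ℕ) := {(1,6),(2,10),(3,8)}
def SBex : Finset (ℕ × ℕ) := {(1,6),(2,10),(4,9)}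
def Sfull : Finset (ℕ × ℕ) := {(1,6),(2,10),(3,8),(4,9)}

lemma noK4full : Noncrossing 4 Sfull := by
  rintro ⟨f, hm, h1, h2, -⟩
  have m0 := hm 0; have m1 := hm 1; have m2 := hm 2; have m3 := hm 3
  simp only [Sfull, Finset.mem_insert, Finset.mem_singleton] at m0 m1 m2 m3
  have a01 := h1 0 1 (by decide); have a12 := h1 1 2 (by decide)
  have a23 := h1 2 3 (by decide)
  have b01 := h2 0 1 (by decide); have b12 := h2 1 2 (by decide)
  have b23 := h2 2 3 (by decide)
  rcases m0 with h0|h0|h0|h0 <;> rcases m1 with hA|hA|hA|hA <;>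
    rcases m2 with hB|hB|hB|hB <;> rcases m3 with hC|hC|hC|hC <;>
    rw [h0] at a01 b01 <;> rw [hA] at a01 b01 a12 b12 <;>
    rw [hB] at a12 b12 a23 b23 <;> rw [hC] at a23 b23 <;> simp at a01 a12 a23 b01 b12 b23

lemma skelS0 : IsSkeleton 4 1 1 10 S0ex :=
  ⟨by decide, by decide, noK (by decide), by unfold MinArc4; decide,
   fun _ _ _ h => h.1, by unfold Paired; decide, by unfold Paired; decide,
   by unfold ArcCross; decide⟩

lemma skelSA : IsSkeleton 4 1 1 10 SAex :=
  ⟨by decide, by decide, noK (by decide), by unfold MinArc4; decide,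
   fun _ _ _ h => h.1, by unfold Paired; decide, by unfold Paired; decide,
   by unfold ArcCross; decide⟩

lemma skelSB : IsSkeleton 4 1 1 10 SBex :=
  ⟨by decide, by decide, noK (by decide), by unfold MinArc4; decide,
   fun _ _ _ h => h.1, by unfold Paired; decide, by unfold Paired; decide,
   by unfold ArcCross; decide⟩

lemma skelSfull : IsSkeleton 4 1 1 10 Sfull :=
  ⟨by decide, by decide, noK4full, by unfold MinArc4; decide,
   fun _ _ _ h => h.1, by unfold Paired; decide, by unfold Paired; decide,
   by unfold ArcCross; decide⟩

lemma stepA : InsertStep 4 1 1 10 (S0ex, 0) (SAex, 2) := by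
  refine ⟨3, 8, 1, one_pos, by norm_num, ?_, by decide, ?_, skelSA, ?_, ?_, by norm_num, ?_⟩
  · intro t ht; interval_cases t
    exact ⟨by unfold Paired; decide, by unfold Paired; decide⟩
  · rw [stack1]; decide
  · intro c hc; fin_cases hc <;> (unfold ArcNested; simp)
  · unfold Paired; decide
  · intro v _ hv; omega

lemma stepAB : InsertStep 4 1 1 10 (SAex, 2) (Sfull, 3) := by
  refine ⟨4, 9, 1, one_pos, by norm_num, ?_, by decide, ?_, skelSfull, ?_, ?_, by norm_num, ?_⟩
  · intro t ht; interval_cases t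
    exact ⟨by unfold Paired; decide, by unfold Paired; decide⟩
  · rw [stack1]; decide
  · intro c hc; fin_cases hc <;> (unfold ArcNested; simp)
  · unfold Paired; decide
  · intro v _ hv; omega

lemma stepB : InsertStep 4 1 1 10 (S0ex, 0) (SBex, 2) := by
  refine ⟨4, 9, 1, one_pos, by norm_num, ?_, by decide, ?_, skelSB, ?_, ?_, by norm_num, ?_⟩
  · intro t ht; interval_cases t
    exact ⟨by unfold Paired; decide, by unfold Paired; decide⟩
  · rw [stack1]; decide
  · intro c hc; fin_cases hc <;> (unfold ArcNested; simp)
  · unfold Paired; decide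
  · intro v hv hlt
    simp only [Paired, S0ex, Finset.mem_insert, Finset.mem_singleton] at hv
    obtain ⟨a, ha, h⟩ := hv
    rcases ha with ha | ha <;> subst ha <;> simp at h <;> omega

lemma stepBA : InsertStep 4 1 1 10 (SBex, 2) (Sfull, 2) := by
  refine ⟨3, 8, 1, one_pos, by norm_num, ?_, by decide, ?_, skelSfull, ?_, ?_, by norm_num, ?_⟩
  · intro t ht; interval_cases t
    exact ⟨by unfold Paired; decide, by unfold Paired; decide⟩
  · rw [stack1]; decide
  · intro c hc; fin_cases hc <;> (unfold ArcNested; simp)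
  · unfold Paired; decide
  · intro v _ hv; omega

/-- For `k = 4` the projection of the insertion tree onto skeleta is in
general not injective: there exist a 4-noncrossing skeleton `S₀`, an integer `r₀`, and two
distinct vertices `(S₁,r₁) ≠ (S₂,r₂)` of the insertion graph `G_{(S₀,r₀)}` (built with
4-noncrossing skeleta) with `S₁ = S₂`; i.e. the graph morphism `π(S,r) = S` is not
bijective. -/
theorem statement14 :
    ∃ (σ₀ i j : ℕ) (S₀ : Finset (ℕ × ℕ)) (r₀ : ℕ) (v₁ v₂ : Finset (ℕ × ℕ) × ℕ),
      IsSkeleton 4 σ₀ i j S₀ ∧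
      Relation.ReflTransGen (InsertStep 4 σ₀ i j) (S₀, r₀) v₁ ∧
      Relation.ReflTransGen (InsertStep 4 σ₀ i j) (S₀, r₀) v₂ ∧
      v₁ ≠ v₂ ∧ v₁.1 = v₂.1 := by
  refine ⟨1, 1, 10, S0ex, 0, (Sfull, 3), (Sfull, 2), skelS0, ?_, ?_, ?_, rfl⟩
  · exact Relation.ReflTransGen.head stepA (Relation.ReflTransGen.single stepAB)
  · exact Relation.ReflTransGen.head stepB (Relation.ReflTransGen.single stepBA)
  · simp
end

section
/- Let S be a 3-noncrossing diagram and β an arc of S. Then any two distinct arcs (i,j), (i′,j′) ∈ 𝒜_S(β) (arcs crossing β) do not cross each other: either one is nested in the other ((i,j) ≺ (i′,j′) or (i′,j′) ≺ (i,j)) or they are disjoint (j < i′ or j′ < i). Consequently, for every arc β of S and every α ∈ 𝒜_S(β), the set 𝒜_S(β) contains a unique ≺-minimal element among those of its arcs nested in or equal to α. -/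
open Classical

lemma hk3 {D : Finset (ℕ × ℕ)} (a b c : ℕ × ℕ) (ha : a ∈ D) (hb : b ∈ D) (hc : c ∈ D)
    (h1 : a.1 < b.1) (h2 : b.1 < c.1) (h3 : c.1 < a.2) (h4 : a.2 < b.2) (h5 : b.2 < c.2) :
    HasKCrossing 3 D := by
  refine ⟨![a,b,c], ?_, ?_, ?_, ?_⟩
  · intro t; fin_cases t <;> simpa
  · intro t u htu; fin_cases t <;> fin_cases u <;> simp_all [Fin.lt_def] <;> omega
  · intro t u htu; fin_cases t <;> fin_cases u <;> simp_all [Fin.lt_def] <;> omega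
  · intro t u; fin_cases t <;> fin_cases u <;> simp <;> omega

lemma no3 {D : Finset (ℕ × ℕ)} (h3 : Noncrossing 3 D) {x y z : ℕ × ℕ}
    (hx : x ∈ D) (hy : y ∈ D) (hz : z ∈ D)
    (hxy : ArcCross x y) (hyz : ArcCross y z) (hxz : ArcCross x z) : False := by
  rcases hxy with ⟨a1,a2,a3⟩|⟨a1,a2,a3⟩ <;> rcases hyz with ⟨b1,b2,b3⟩|⟨b1,b2,b3⟩ <;>
    rcases hxz with ⟨c1,c2,c3⟩|⟨c1,c2,c3⟩ <;>
  exact h3 (by first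
    | exact hk3 x y z hx hy hz (by omega) (by omega) (by omega) (by omega) (by omega)
    | exact hk3 x z y hx hz hy (by omega) (by omega) (by omega) (by omega) (by omega)
    | exact hk3 y x z hy hx hz (by omega) (by omega) (by omega) (by omega) (by omega)
    | exact hk3 y z x hy hz hx (by omega) (by omega) (by omega) (by omega) (by omega)
    | exact hk3 z x y hz hx hy (by omega) (by omega) (by omega) (by omega) (by omega)
    | exact hk3 z y x hz hy hx (by omega) (by omega) (by omega) (by omega) (by omega))

/-- Let `S` be a 3-noncrossing diagram and `β` an `S`-arc.  Any two
distinct arcs of `𝒜_S(β)` (the `S`-arcs crossing `β`) do not cross each other: one is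
nested in the other, or they are disjoint.  Consequently, for every `α ∈ 𝒜_S(β)`, the set
`𝒜_S(β)` contains a unique `≺`-minimal element among those of its arcs nested in or equal
to `α`. -/
theorem statement16 (n : ℕ) (D : Finset (ℕ × ℕ)) (hD : IsDiagram n D)
    (h3 : Noncrossing 3 D) (β : ℕ × ℕ) (hβ : β ∈ D) :
    (∀ a ∈ D, ∀ b ∈ D, ArcCross a β → ArcCross b β → a ≠ b →
      ¬ ArcCross a b ∧ (ArcNested a b ∨ ArcNested b a ∨ a.2 < b.1 ∨ b.2 < a.1)) ∧
    (∀ α ∈ D, ArcCross α β →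
      ∃! γ : ℕ × ℕ, γ ∈ D ∧ ArcCross γ β ∧ (ArcNested γ α ∨ γ = α) ∧
        ∀ γ' ∈ D, ArcCross γ' β → (ArcNested γ' α ∨ γ' = α) → ¬ ArcNested γ' γ) := by
  
  obtain ⟨hD1, hD2⟩ := hD
  have part1 : ∀ a ∈ D, ∀ b ∈ D, ArcCross a β → ArcCross b β → a ≠ b →
      ¬ ArcCross a b ∧ (ArcNested a b ∨ ArcNested b a ∨ a.2 < b.1 ∨ b.2 < a.1) := by
    intro a ha b hb haβ hbβ hab
    have hnc : ¬ ArcCross a b := fun h => no3 h3 ha hb hβ h hbβ haβ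
    have hd := hD2 a ha b hb hab
    have ha' := hD1 a ha
    have hb' := hD1 b hb
    refine ⟨hnc, ?_⟩
    unfold ArcCross at hnc
    unfold ArcNested
    omega
  refine ⟨part1, ?_⟩
  intro α hα hαβ
  have hchain : ∀ γ ∈ D, ArcCross γ β → (ArcNested γ α ∨ γ = α) →
      ∀ γ' ∈ D, ArcCross γ' β → (ArcNested γ' α ∨ γ' = α) → γ ≠ γ' →
      ArcNested γ γ' ∨ ArcNested γ' γ := by
    intro γ hγ hγβ hγα γ' hγ' hγ'β hγ'α hne
    have h := (part1 γ hγ γ' hγ' hγβ hγ'β hne).2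
    have e1 : α.1 ≤ γ.1 ∧ γ.2 ≤ α.2 := by
      rcases hγα with h' | h'
      · exact ⟨h'.1.le, h'.2.le⟩
      · subst h'; exact ⟨le_rfl, le_rfl⟩
    have e2 : α.1 ≤ γ'.1 ∧ γ'.2 ≤ α.2 := by
      rcases hγ'α with h' | h'
      · exact ⟨h'.1.le, h'.2.le⟩
      · subst h'; exact ⟨le_rfl, le_rfl⟩
    rcases h with h | h | h | h
    · exact Or.inl h
    · exact Or.inr h
    · exfalso; unfold ArcCross at hαβ hγβ hγ'β; unfold ArcNested at hγα hγ'α; omega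
    · exfalso; unfold ArcCross at hαβ hγβ hγ'β; unfold ArcNested at hγα hγ'α; omega
  set T := D.filter (fun γ => ArcCross γ β ∧ (ArcNested γ α ∨ γ = α)) with hT
  have hαT : α ∈ T := by simp [hT, Finset.mem_filter, hα, hαβ]
  obtain ⟨γ₀, hγ₀T, hmax⟩ := T.exists_max_image Prod.fst ⟨α, hαT⟩
  rw [hT, Finset.mem_filter] at hγ₀T
  obtain ⟨hγ₀D, hγ₀β, hγ₀α⟩ := hγ₀T
  have hmin : ∀ γ' ∈ D, ArcCross γ' β → (ArcNested γ' α ∨ γ' = α) → ¬ ArcNested γ' γ₀ := by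
    intro γ' hγ'D hγ'β hγ'α hnest
    have hle := hmax γ' (by simp [hT, Finset.mem_filter, hγ'D, hγ'β, hγ'α])
    exact absurd hle (not_le.mpr hnest.1)
  refine ⟨γ₀, ⟨hγ₀D, hγ₀β, hγ₀α, hmin⟩, ?_⟩
  rintro γ₁ ⟨h1D, h1β, h1α, h1min⟩
  by_contra hne
  rcases hchain γ₁ h1D h1β h1α γ₀ hγ₀D hγ₀β hγ₀α hne with h | h
  · exact hmin γ₁ h1D h1β h1α h
  · exact h1min γ₀ hγ₀D hγ₀β hγ₀α h
end
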